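/- arXiv:1803.00122 — 7 statements merged into one kernel-verified Lean document; each statement's English description precedes it below -/
import Mathlib

section
/- Let (f_n)_{n∈ℕ} and (g_n)_{n∈ℕ} be sequences with dense image in C[0,1] such that ⌊‖f_i − f_j‖⌋ = ⌊‖g_i − g_j‖⌋ for all i, j. Then there exists a homeomorphism ψ : [0,1] → [0,1] such that one of the following holds: (order-preserving case) for all i, j and all x ∈ [0,1], if f_i(x) > f_j(x) then g_i(ψ(x)) ≥ g_j(ψ(x)); or (order-reversing case) for all i, j and all x ∈ [0,1], if f_i(x) > f_j(x) then g_i(ψ(x)) ≤ g_j(ψ(x)). (This is the paper's Theorem 4.4, with the almost-sure graph-isomorphism hypothesis replaced by its step-isometry consequence and the permutation absorbed by relabeling.) -/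
open Set unitInterval

noncomputable section StepIso

namespace StepIsoAux

/-- Every continuous function on `[0,1]` attains its sup norm. -/
lemma exists_norm_apply (u : C(I, ℝ)) : ∃ z : I, |u z| = ‖u‖ := by
  obtain ⟨z, -, hz⟩ := isCompact_univ.exists_isMaxOn univ_nonempty
    (continuous_abs.comp u.continuous).continuousOn
  refine ⟨z, le_antisymm (by simpa [Real.norm_eq_abs] using u.norm_coe_le_norm z) ?_⟩
  refine (ContinuousMap.norm_le u (abs_nonneg _)).2 fun t => ?_
  simpa [Real.norm_eq_abs] using hz (mem_univ t)

lemma apply_le_norm (u : C(I, ℝ)) (t : I) : |u t| ≤ ‖u‖ := by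
  simpa [Real.norm_eq_abs] using u.norm_coe_le_norm t

lemma norm_le_of (u : C(I, ℝ)) {C : ℝ} (hC : 0 ≤ C) (H : ∀ t, |u t| ≤ C) : ‖u‖ ≤ C :=
  (ContinuousMap.norm_le u hC).2 (by simpa [Real.norm_eq_abs] using H)

lemma sub_apply_le (u v : C(I, ℝ)) (t : I) : |u t - v t| ≤ ‖u - v‖ := by
  simpa using apply_le_norm (u - v) t

/-- Tent function at `x` of width `w`, height 1. -/
def tentA (x : I) (w : ℝ) : C(I, ℝ) :=
  ⟨fun t => max 0 (1 - |(t : ℝ) - (x : ℝ)| / w), by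
    refine continuous_const.max ?_
    exact (continuous_const.sub (((continuous_subtype_val.sub continuous_const).abs).div_const w))⟩

lemma tent_apply' (x : I) (w : ℝ) (t : I) :
    tentA x w t = max 0 (1 - |(t : ℝ) - (x : ℝ)| / w) := rfl

lemma tent_self' (x : I) (w : ℝ) : tentA x w x = 1 := by
  simp [tent_apply']

lemma tent_nonneg' (x : I) (w : ℝ) (t : I) : 0 ≤ tentA x w t := le_max_left _ _

lemma tent_le_one' (x : I) (w : ℝ) (hw : 0 < w) (t : I) : tentA x w t ≤ 1 := by
  rw [tent_apply']
  refine max_le (by norm_num) ?_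
  have : 0 ≤ |(t : ℝ) - (x : ℝ)| / w := div_nonneg (abs_nonneg _) hw.le
  linarith

lemma tent_eq_zero' (x : I) (w : ℝ) (hw : 0 < w) (t : I) (ht : w ≤ |(t : ℝ) - (x : ℝ)|) :
    tentA x w t = 0 := by
  rw [tent_apply', max_eq_left]
  have : 1 ≤ |(t : ℝ) - (x : ℝ)| / w := (one_le_div hw).2 ht
  linarith


lemma probe (v : C(I, ℝ)) (x : I) (c w δ : ℝ) (hw : 0 < w) (hδ : 0 ≤ δ)
    (hosc : ∀ t : I, |(t : ℝ) - (x : ℝ)| ≤ w → |v t - v x| ≤ δ)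
    (hc : 2 * ‖v‖ ≤ c) :
    c - v x ≤ ‖c • tentA x w - v‖ ∧ ‖c • tentA x w - v‖ ≤ c - v x + δ := by
  have hv0 : (0:ℝ) ≤ ‖v‖ := norm_nonneg v
  have hvx : |v x| ≤ ‖v‖ := apply_le_norm v x
  have hvx1 : v x ≤ ‖v‖ := (abs_le.1 hvx).2
  have hvx2 : -‖v‖ ≤ v x := (abs_le.1 hvx).1
  constructor
  · have := apply_le_norm (c • tentA x w - v) x
    have hx : (c • tentA x w - v) x = c - v x := by
      simp [tent_self']
    rw [hx] at this
    have : c - v x ≤ |c - v x| := le_abs_self _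
    calc c - v x ≤ |c - v x| := this
      _ ≤ ‖c • tentA x w - v‖ := by
          have h2 := apply_le_norm (c • tentA x w - v) x
          rw [hx] at h2; exact h2
  · refine norm_le_of _ (by linarith) fun t => ?_
    have happ : (c • tentA x w - v) t = c * tentA x w t - v t := by simp
    rw [happ, abs_le]
    rcases le_or_gt (|(t : ℝ) - (x : ℝ)|) w with h1 | h1
    · have hosct := hosc t h1
      have h2 := abs_le.1 hosct
      have h3 : 0 ≤ tentA x w t := tent_nonneg' x w t
      have h4 : tentA x w t ≤ 1 := tent_le_one' x w hw t
      have hvt : |v t| ≤ ‖v‖ := apply_le_norm v t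
      have hvt' := abs_le.1 hvt
      constructor
      · nlinarith
      · nlinarith
    · have h0 : tentA x w t = 0 := tent_eq_zero' x w hw t h1.le
      rw [h0]
      have hvt := abs_le.1 (apply_le_norm v t)
      constructor <;> nlinarith

lemma exists_bound (F : ℕ → C(I, ℝ)) (n : ℕ) : ∃ M : ℝ, ∀ i ≤ n, ‖F i‖ ≤ M := by
  induction n with
  | zero => exact ⟨‖F 0‖, fun i hi => by simp [Nat.le_zero.1 hi]⟩
  | succ n ih =>
      obtain ⟨M, hM⟩ := ih
      refine ⟨max M ‖F (n+1)‖, fun i hi => ?_⟩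
      rcases Nat.le_succ_iff.1 hi with h | h
      · exact (hM i h).trans (le_max_left _ _)
      · simp [h, le_max_right]

lemma exists_window (F : ℕ → C(I, ℝ)) (n : ℕ) (x : I) (δ : ℝ) (hδ : 0 < δ) :
    ∃ w : ℝ, 0 < w ∧ ∀ i ≤ n, ∀ t : I, |(t : ℝ) - (x : ℝ)| ≤ w → |F i t - F i x| ≤ δ := by
  induction n with
  | zero =>
      obtain ⟨w, hw, hww⟩ := Metric.continuousAt_iff.1 ((F 0).continuous.continuousAt (x := x)) δ hδ
      refine ⟨w/2, by linarith, fun i hi t ht => ?_⟩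
      have : i = 0 := Nat.le_zero.1 hi
      subst this
      have hd : dist t x < w := by
        rw [Subtype.dist_eq, Real.dist_eq]; linarith
      have := hww hd
      rw [Real.dist_eq] at this
      exact this.le
  | succ n ih =>
      obtain ⟨w1, hw1, hw1'⟩ := ih
      obtain ⟨w, hw, hww⟩ := Metric.continuousAt_iff.1
        ((F (n+1)).continuous.continuousAt (x := x)) δ hδ
      refine ⟨min w1 (w/2), by positivity, fun i hi t ht => ?_⟩
      rcases Nat.le_succ_iff.1 hi with h | h
      · exact hw1' i h t (ht.trans (min_le_left _ _))
      · subst h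
        have hd : dist t x < w := by
          rw [Subtype.dist_eq, Real.dist_eq]
          have := ht.trans (min_le_right _ _)
          linarith
        have := hww hd
        rw [Real.dist_eq] at this
        exact this.le

lemma exists_close {F : ℕ → C(I, ℝ)} (hF : DenseRange F) (u : C(I, ℝ)) (δ : ℝ) (hδ : 0 < δ) :
    ∃ k, ‖F k - u‖ ≤ δ := by
  obtain ⟨k, hk⟩ := hF.exists_dist_lt u hδ
  rw [dist_eq_norm, norm_sub_rev] at hk
  exact ⟨k, hk.le⟩


lemma shadow_gen (F G : ℕ → C(I, ℝ)) (hF : DenseRange F)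
    (hub : ∀ i j, ‖G i - G j‖ < ‖F i - F j‖ + 1)
    (hlb : ∀ i j, ‖F i - F j‖ - 1 < ‖G i - G j‖)
    (I0 : ℕ) (hI0 : ‖F I0‖ ≤ 1) (x : I) (n : ℕ) :
    ∃ y : I, (∀ i ≤ n, |G i y - F i x| ≤ ‖G I0‖ + 5) ∨
      (∀ i ≤ n, |G i y + F i x| ≤ ‖G I0‖ + 5) := by
  obtain ⟨δ, hδdef⟩ : ∃ δ : ℝ, δ = 1/10 := ⟨_, rfl⟩
  have hδ : (0:ℝ) < δ := by rw [hδdef]; norm_num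
  obtain ⟨n', hn'⟩ : ∃ n' : ℕ, n' = max n I0 := ⟨_, rfl⟩
  obtain ⟨M0, hM0⟩ := exists_bound F n'
  obtain ⟨M, hM⟩ : ∃ M : ℝ, M = max M0 0 + 1 := ⟨_, rfl⟩
  have hMpos : (0:ℝ) < M := by rw [hM]; positivity
  have hMb : ∀ i ≤ n', ‖F i‖ ≤ M := fun i hi =>
    (hM0 i hi).trans (by have := le_max_left M0 (0:ℝ); linarith)
  obtain ⟨w, hw, hosc⟩ := exists_window F n' x δ hδ
  obtain ⟨c, hc⟩ : ∃ c : ℝ, c = 2 * M + 2 := ⟨_, rfl⟩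
  have hcpos : (0:ℝ) < c := by rw [hc]; linarith
  have hprobe : ∀ i ≤ n', c - F i x ≤ ‖c • tentA x w - F i‖ ∧
      ‖c • tentA x w - F i‖ ≤ c - F i x + δ := fun i hi =>
    probe (F i) x c w δ hw hδ.le (hosc i hi) (by have := hMb i hi; linarith)
  have hprobe' : ∀ i ≤ n', c + F i x ≤ ‖c • tentA x w - (-F i)‖ ∧
      ‖c • tentA x w - (-F i)‖ ≤ c + F i x + δ := by
    intro i hi
    have hosc' : ∀ t : I, |(t : ℝ) - (x : ℝ)| ≤ w → |(-F i) t - (-F i) x| ≤ δ := by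
      intro t ht
      have h1 := hosc i hi t ht
      have h2 : (-F i) t - (-F i) x = -(F i t - F i x) := by simp; ring
      rw [h2, abs_neg]; exact h1
    have := probe (-F i) x c w δ hw hδ.le hosc' (by rw [norm_neg]; have := hMb i hi; linarith)
    simpa using this
  obtain ⟨k, hk⟩ := exists_close hF (c • tentA x w) δ hδ
  obtain ⟨k', hk'⟩ := exists_close hF ((-c) • tentA x w) δ hδ
  -- upper bounds on ‖F k - F i‖ and ‖F k' - F i‖
  have hFki : ∀ i ≤ n', ‖F k - F i‖ ≤ c - F i x + 2*δ := by
    intro i hi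
    have h1 := norm_add_le (F k - c • tentA x w) (c • tentA x w - F i)
    rw [sub_add_sub_cancel] at h1
    exact h1.trans (by have := (hprobe i hi).2; linarith)
  have hFk'i : ∀ i ≤ n', ‖F k' - F i‖ ≤ c + F i x + 2*δ := by
    intro i hi
    have h1 := norm_add_le (F k' - (-c) • tentA x w) ((-c) • tentA x w - F i)
    rw [sub_add_sub_cancel] at h1
    have h2 : ((-c) • tentA x w - F i) = -(c • tentA x w - (-F i)) := by
      ext t; simp; ring
    rw [h2, norm_neg] at h1
    exact h1.trans (by have := (hprobe' i hi).2; linarith)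
  have hGki : ∀ i ≤ n', ‖G k - G i‖ < c - F i x + 2*δ + 1 := fun i hi =>
    (hub k i).trans_le (by have := hFki i hi; linarith)
  have hGk'i : ∀ i ≤ n', ‖G k' - G i‖ < c + F i x + 2*δ + 1 := fun i hi =>
    (hub k' i).trans_le (by have := hFk'i i hi; linarith)
  -- lower bound on ‖F k - F k'‖ via values at x
  have htx : (c • tentA x w) x = c := by simp [tent_self']
  have htx' : ((-c) • tentA x w) x = -c := by simp [tent_self']
  have hFkx : |F k x - c| ≤ δ := by
    have := sub_apply_le (F k) (c • tentA x w) x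
    rw [htx] at this; exact this.trans hk
  have hFk'x : |F k' x - (-c)| ≤ δ := by
    have := sub_apply_le (F k') ((-c) • tentA x w) x
    rw [htx'] at this; exact this.trans hk'
  have hFkk' : 2*c - 2*δ ≤ ‖F k - F k'‖ := by
    have h1 := sub_apply_le (F k) (F k') x
    have h2 := abs_le.1 hFkx
    have h3 := abs_le.1 hFk'x
    have h4 : 2*c - 2*δ ≤ F k x - F k' x := by linarith
    have h5 : F k x - F k' x ≤ |F k x - F k' x| := le_abs_self _
    linarith
  have hGkk' : 2*c - 2*δ - 1 < ‖G k - G k'‖ := by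
    have := hlb k k'; linarith
  obtain ⟨z0, hz0⟩ := exists_norm_apply (G k - G k')
  have hz0' : (G k - G k') z0 = G k z0 - G k' z0 := by simp
  rw [hz0'] at hz0
  -- bounds on ‖G k‖, ‖G k'‖ via reference index I0
  have hI0n' : I0 ≤ n' := hn' ▸ le_max_right n I0
  have hFI0x : |F I0 x| ≤ 1 := (apply_le_norm (F I0) x).trans hI0
  have hFI0x' := abs_le.1 hFI0x
  have hGkbd : ‖G k‖ ≤ c + 2*δ + 2 + ‖G I0‖ := by
    have h1 := norm_add_le (G k - G I0) (G I0)
    rw [sub_add_cancel] at h1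
    have h2 := hGki I0 hI0n'
    linarith
  have hGk'bd : ‖G k'‖ ≤ c + 2*δ + 2 + ‖G I0‖ := by
    have h1 := norm_add_le (G k' - G I0) (G I0)
    rw [sub_add_cancel] at h1
    have h2 := hGk'i I0 hI0n'
    linarith
  have hGkz := abs_le.1 (apply_le_norm (G k) z0)
  have hGk'z := abs_le.1 (apply_le_norm (G k') z0)
  have hBG : (0:ℝ) ≤ ‖G I0‖ := norm_nonneg _
  rcases le_or_gt 0 (G k z0 - G k' z0) with hsign | hsign
  · -- positive case
    have hmain : 2*c - 2*δ - 1 < G k z0 - G k' z0 := by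
      rw [abs_of_nonneg hsign] at hz0; linarith
    refine ⟨z0, Or.inl fun i hi => ?_⟩
    have hin' : i ≤ n' := hi.trans (hn' ▸ le_max_left n I0)
    obtain ⟨a11, a12⟩ := abs_le.1 ((sub_apply_le (G k) (G i) z0).trans (hGki i hin').le)
    obtain ⟨a21, a22⟩ := abs_le.1 ((sub_apply_le (G k') (G i) z0).trans (hGk'i i hin').le)
    rw [abs_le]
    have e0 : -(c + 2*δ + 2 + ‖G I0‖) ≤ G k' z0 := by linarith [hGk'z.1]
    have e1 : G k z0 ≥ 2*c - 2*δ - 1 + G k' z0 := by linarith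
    have e2 : G k z0 ≤ c + 2*δ + 2 + ‖G I0‖ := by linarith [hGkz.2]
    constructor
    · linarith
    · linarith
  · -- negative case
    have hmain : 2*c - 2*δ - 1 < G k' z0 - G k z0 := by
      rw [abs_of_neg (by linarith)] at hz0; linarith
    refine ⟨z0, Or.inr fun i hi => ?_⟩
    have hin' : i ≤ n' := hi.trans (hn' ▸ le_max_left n I0)
    obtain ⟨a11, a12⟩ := abs_le.1 ((sub_apply_le (G k) (G i) z0).trans (hGki i hin').le)
    obtain ⟨a21, a22⟩ := abs_le.1 ((sub_apply_le (G k') (G i) z0).trans (hGk'i i hin').le)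
    rw [abs_le]
    have e0 : -(c + 2*δ + 2 + ‖G I0‖) ≤ G k z0 := by linarith [hGkz.1]
    have e1 : G k' z0 ≥ 2*c - 2*δ - 1 + G k z0 := by linarith
    have e2 : G k' z0 ≤ c + 2*δ + 2 + ‖G I0‖ := by linarith [hGk'z.2]
    constructor
    · linarith
    · linarith


lemma closed_cap (φ : ℕ → I → ℝ) (hφ : ∀ i, Continuous (φ i)) (K : ℝ) (n : ℕ) :
    IsClosed {y : I | ∀ i ≤ n, |φ i y| ≤ K} := by
  have : {y : I | ∀ i ≤ n, |φ i y| ≤ K} = ⋂ (i : ℕ) (_ : i ≤ n), {y : I | |φ i y| ≤ K} := by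
    ext y; simp
  rw [this]
  exact isClosed_iInter fun i => isClosed_iInter fun _ =>
    isClosed_le ((hφ i).abs) continuous_const

lemma nested_nonempty (T : ℕ → Set I) (hmono : ∀ n, T (n+1) ⊆ T n)
    (hne : ∀ n, (T n).Nonempty) (hcl : ∀ n, IsClosed (T n)) : (⋂ n, T n).Nonempty :=
  IsCompact.nonempty_iInter_of_sequence_nonempty_isCompact_isClosed T hmono hne
    ((hcl 0).isCompact) hcl

lemma shadow_full (F G : ℕ → C(I, ℝ)) (hF : DenseRange F)
    (hub : ∀ i j, ‖G i - G j‖ < ‖F i - F j‖ + 1)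
    (hlb : ∀ i j, ‖F i - F j‖ - 1 < ‖G i - G j‖)
    (I0 : ℕ) (hI0 : ‖F I0‖ ≤ 1) (x : I) :
    ∃ y : I, (∀ i, |G i y - F i x| ≤ ‖G I0‖ + 5) ∨
      (∀ i, |G i y + F i x| ≤ ‖G I0‖ + 5) := by
  set K0 : ℝ := ‖G I0‖ + 5 with hK0
  set Yp : ℕ → Set I := fun n => {y : I | ∀ i ≤ n, |G i y - F i x| ≤ K0} with hYp
  set Ym : ℕ → Set I := fun n => {y : I | ∀ i ≤ n, |G i y + F i x| ≤ K0} with hYm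
  have hclp : ∀ n, IsClosed (Yp n) := fun n =>
    closed_cap (fun i y => G i y - F i x) (fun i => (G i).continuous.sub continuous_const) K0 n
  have hclm : ∀ n, IsClosed (Ym n) := fun n =>
    closed_cap (fun i y => G i y + F i x) (fun i => (G i).continuous.add continuous_const) K0 n
  have hmonop : ∀ n, Yp (n+1) ⊆ Yp n := fun n y hy i hi => hy i (hi.trans (Nat.le_succ n))
  have hmonom : ∀ n, Ym (n+1) ⊆ Ym n := fun n y hy i hi => hy i (hi.trans (Nat.le_succ n))
  by_cases hall : ∀ n, (Yp n).Nonempty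
  · obtain ⟨y, hy⟩ := nested_nonempty Yp hmonop hall hclp
    refine ⟨y, Or.inl fun i => ?_⟩
    have := mem_iInter.1 hy i
    exact this i le_rfl
  · push_neg at hall
    obtain ⟨n0, hn0⟩ := hall
    have hallm : ∀ n, (Ym n).Nonempty := by
      intro n
      obtain ⟨y, hy⟩ := shadow_gen F G hF hub hlb I0 hI0 x (max n n0)
      rcases hy with hy | hy
      · have hmem : y ∈ Yp n0 := by
          intro i hi; exact hy i (hi.trans (le_max_right n n0))
        rw [hn0] at hmem
        exact absurd hmem (Set.notMem_empty y)
      · exact ⟨y, by intro i hi; exact hy i (hi.trans (le_max_left n n0))⟩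
    obtain ⟨y, hy⟩ := nested_nonempty Ym hmonom hallm hclm
    refine ⟨y, Or.inr fun i => ?_⟩
    exact (mem_iInter.1 hy i) i le_rfl


lemma cont_window (φ : I → ℝ) (hφ : Continuous φ) (x : I) (δ : ℝ) (hδ : 0 < δ) :
    ∃ w : ℝ, 0 < w ∧ ∀ t : I, |(t : ℝ) - (x : ℝ)| ≤ w → |φ t - φ x| ≤ δ := by
  obtain ⟨w, hw, hww⟩ := Metric.continuousAt_iff.1 (hφ.continuousAt (x := x)) δ hδ
  refine ⟨w/2, by linarith, fun t ht => ?_⟩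
  have hd : dist t x < w := by rw [Subtype.dist_eq, Real.dist_eq]; linarith
  have := hww hd
  rw [Real.dist_eq] at this
  exact this.le

/-- Separation: distinct points are separated by some member of a dense family,
by an arbitrarily large amount. -/
lemma separation {G : ℕ → C(I, ℝ)} (hG : DenseRange G) (R : ℝ) (y1 y2 : I) (hne : y1 ≠ y2) :
    ∃ i, R + 1 ≤ |G i y1 - G i y2| := by
  have hd : 0 < |(y2 : ℝ) - (y1 : ℝ)| := by
    rw [abs_pos, sub_ne_zero]
    exact fun hc => hne (Subtype.coe_injective hc.symm)
  set d := |(y2 : ℝ) - (y1 : ℝ)| with hdd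
  set v : C(I, ℝ) := (R + 2) • tentA y1 d with hv
  obtain ⟨i, hi⟩ := exists_close hG v (1/4) (by norm_num)
  have h1 : |G i y1 - v y1| ≤ 1/4 := (sub_apply_le (G i) v y1).trans hi
  have h2 : |G i y2 - v y2| ≤ 1/4 := (sub_apply_le (G i) v y2).trans hi
  have hv1 : v y1 = R + 2 := by rw [hv]; simp [tent_self']
  have hv2 : v y2 = 0 := by
    rw [hv]; simp [tent_eq_zero' y1 d hd y2 le_rfl]
  rw [hv1] at h1; rw [hv2] at h2
  have h1' := abs_le.1 h1
  have h2' := abs_le.1 h2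
  refine ⟨i, ?_⟩
  have : R + 1 ≤ G i y1 - G i y2 := by linarith
  exact this.trans (le_abs_self _)

lemma main_pos (f g : ℕ → C(I, ℝ)) (hf : DenseRange f) (hg : DenseRange g)
    (hth : ∀ i j : ℕ, ∀ N : ℤ, (N : ℝ) ≤ ‖f i - f j‖ → (N : ℝ) ≤ ‖g i - g j‖)
    (hth' : ∀ i j : ℕ, ∀ N : ℤ, ‖f i - f j‖ < (N : ℝ) → ‖g i - g j‖ < (N : ℝ))
    (K : ℝ) (hK : 0 ≤ K)
    (cov1 : ∀ x : I, ∃ y : I, ∀ i, |g i y - f i x| ≤ K)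
    (cov2 : ∀ y : I, ∃ x : I, ∀ i, |g i y - f i x| ≤ K) :
    ∃ ψ : I ≃ₜ I, ∀ i j : ℕ, ∀ x : I, f i x > f j x → g i (ψ x) ≥ g j (ψ x) := by
  -- uniqueness of shadows
  have uniq_y : ∀ (x : I) (y1 y2 : I), (∀ i, |g i y1 - f i x| ≤ K) →
      (∀ i, |g i y2 - f i x| ≤ K) → y1 = y2 := by
    intro x y1 y2 h1 h2
    by_contra hne
    obtain ⟨i, hi⟩ := separation hg (2*K) y1 y2 hne
    have a1 := abs_le.1 (h1 i)
    have a2 := abs_le.1 (h2 i)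
    have : |g i y1 - g i y2| ≤ 2*K := by
      rw [abs_le]; constructor <;> linarith
    linarith
  have uniq_x : ∀ (y : I) (x1 x2 : I), (∀ i, |g i y - f i x1| ≤ K) →
      (∀ i, |g i y - f i x2| ≤ K) → x1 = x2 := by
    intro y x1 x2 h1 h2
    by_contra hne
    obtain ⟨i, hi⟩ := separation hf (2*K) x1 x2 hne
    have a1 := abs_le.1 (h1 i)
    have a2 := abs_le.1 (h2 i)
    have : |f i x1 - f i x2| ≤ 2*K := by
      rw [abs_le]; constructor <;> linarith
    linarith
  -- the maps
  obtain ⟨ψ0, hψ0⟩ : ∃ ψ0 : I → I, ∀ x : I, ∀ i, |g i (ψ0 x) - f i x| ≤ K :=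
    ⟨fun x => (cov1 x).choose, fun x => (cov1 x).choose_spec⟩
  obtain ⟨χ0, hχ0⟩ : ∃ χ0 : I → I, ∀ y : I, ∀ i, |g i y - f i (χ0 y)| ≤ K :=
    ⟨fun y => (cov2 y).choose, fun y => (cov2 y).choose_spec⟩
  have hli : Function.LeftInverse χ0 ψ0 := fun x =>
    uniq_x (ψ0 x) (χ0 (ψ0 x)) x (hχ0 (ψ0 x)) (hψ0 x)
  have hri : Function.RightInverse χ0 ψ0 := fun y =>
    uniq_y (χ0 y) (ψ0 (χ0 y)) y (hψ0 (χ0 y)) (hχ0 y)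
  let e : I ≃ I := ⟨ψ0, χ0, hli, hri⟩
  -- continuity via closed graph
  have hS : IsClosed {p : I × I | ∀ i, |g i p.2 - f i p.1| ≤ K} := by
    have : {p : I × I | ∀ i, |g i p.2 - f i p.1| ≤ K}
        = ⋂ i, {p : I × I | |g i p.2 - f i p.1| ≤ K} := by ext p; simp
    rw [this]
    exact isClosed_iInter fun i => isClosed_le
      (((g i).continuous.comp continuous_snd).sub
        ((f i).continuous.comp continuous_fst)).abs continuous_const
  have hcont : Continuous ψ0 := by
    rw [continuous_iff_isClosed]
    intro C hC
    have himg : ψ0 ⁻¹' C =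
        Prod.fst '' ({p : I × I | ∀ i, |g i p.2 - f i p.1| ≤ K} ∩ univ ×ˢ C) := by
      ext x
      constructor
      · intro hx
        exact ⟨(x, ψ0 x), ⟨hψ0 x, ⟨mem_univ _, hx⟩⟩, rfl⟩
      · rintro ⟨p, ⟨hp1, ⟨-, hp2⟩⟩, rfl⟩
        have : p.2 = ψ0 p.1 := uniq_y p.1 p.2 (ψ0 p.1) hp1 (hψ0 p.1)
        rw [mem_preimage, ← this]
        exact hp2
    rw [himg]
    exact isClosedMap_fst_of_compactSpace _ (hS.inter (isClosed_univ.prod hC))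
  refine ⟨Continuous.homeoOfEquivCompactToT2 (f := e) (by exact hcont), ?_⟩
  have hψx : ∀ x : I, (Continuous.homeoOfEquivCompactToT2 (f := e) hcont) x = ψ0 x :=
    fun x => rfl
  intro i j x hx
  rw [ge_iff_le, hψx]
  refine le_of_forall_pos_le_add ?_
  intro η hη
  -- quantitative constants
  obtain ⟨δ0, hδ0⟩ : ∃ δ0 : ℝ, δ0 = f i x - f j x := ⟨_, rfl⟩
  have hδ0pos : 0 < δ0 := by rw [hδ0]; linarith
  obtain ⟨δ0', hδ0'⟩ : ∃ δ0' : ℝ, δ0' = min δ0 1 := ⟨_, rfl⟩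
  have hδ0'pos : 0 < δ0' := by rw [hδ0']; exact lt_min hδ0pos one_pos
  have hδ0'le1 : δ0' ≤ 1 := by rw [hδ0']; exact min_le_right _ _
  have hδ0'leδ0 : δ0' ≤ δ0 := by rw [hδ0']; exact min_le_left _ _
  obtain ⟨δ, hδdef⟩ : ∃ δ : ℝ, δ = δ0'/16 := ⟨_, rfl⟩
  have hδpos : 0 < δ := by rw [hδdef]; positivity
  -- windows
  obtain ⟨w1, hw1, hww1⟩ := cont_window (fun t => g i (ψ0 t))
    ((g i).continuous.comp hcont) x (η/4) (by positivity)
  obtain ⟨w2, hw2, hww2⟩ := cont_window (fun t => g j (ψ0 t))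
    ((g j).continuous.comp hcont) x (η/4) (by positivity)
  obtain ⟨w3, hw3, hww3⟩ := cont_window (fun t => f i t) (f i).continuous x δ hδpos
  obtain ⟨w4, hw4, hww4⟩ := cont_window (fun t => f j t) (f j).continuous x δ hδpos
  obtain ⟨w, hwdef⟩ : ∃ w : ℝ, w = min (min w1 w2) (min w3 w4) := ⟨_, rfl⟩
  have hwpos : 0 < w := by rw [hwdef]; positivity
  have hw_1 : w ≤ w1 := by rw [hwdef]; exact (min_le_left _ _).trans (min_le_left _ _)
  have hw_2 : w ≤ w2 := by rw [hwdef]; exact (min_le_left _ _).trans (min_le_right _ _)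
  have hw_3 : w ≤ w3 := by rw [hwdef]; exact (min_le_right _ _).trans (min_le_left _ _)
  have hw_4 : w ≤ w4 := by rw [hwdef]; exact (min_le_right _ _).trans (min_le_right _ _)
  obtain ⟨D, hD⟩ : ∃ D : ℝ, D = ‖f i - f j‖ := ⟨_, rfl⟩
  have hDnn : 0 ≤ D := hD ▸ norm_nonneg _
  obtain ⟨N, hN⟩ : ∃ N : ℤ, N = ⌈D + 2*K + 3⌉ := ⟨_, rfl⟩
  have hND : D + 2*K + 3 ≤ (N:ℝ) := by rw [hN]; exact Int.le_ceil _
  have hNpos : (0:ℝ) < (N:ℝ) := by linarith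
  obtain ⟨A, hA⟩ : ∃ A : ℝ, A = (N:ℝ) + δ0'/2 := ⟨_, rfl⟩
  have hApos : 0 < A := by rw [hA]; linarith
  obtain ⟨m, hm⟩ := exists_close hf (f j + A • tentA x w) δ hδpos
  have hux : (f j + A • tentA x w) x = f j x + A := by simp [tent_self']
  have hmx : |f m x - (f j + A • tentA x w) x| ≤ δ :=
    (sub_apply_le (f m) (f j + A • tentA x w) x).trans hm
  rw [hux] at hmx
  have hmx' := abs_le.1 hmx
  -- F1 : the probe is far from f j
  have hF1 : (N:ℝ) ≤ ‖f m - f j‖ := by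
    have h1 := sub_apply_le (f m) (f j) x
    have h2 : (N:ℝ) ≤ f m x - f j x := by linarith
    exact h2.trans ((le_abs_self _).trans h1)
  have hG1 : (N:ℝ) ≤ ‖g m - g j‖ := hth m j N hF1
  -- F2 : the probe is close to f i in floor terms
  have hF2 : ‖f m - f i‖ < (N:ℝ) := by
    have h2 : ‖(f j + A • tentA x w) - f i‖ ≤ (N:ℝ) - δ0'/8 := by
      refine norm_le_of _ (by linarith) fun t => ?_
      have happ : ((f j + A • tentA x w) - f i) t = f j t + A * tentA x w t - f i t := by
        simp
      have hDt := abs_le.1 ((sub_apply_le (f i) (f j) t).trans_eq hD.symm)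
      have htnn : 0 ≤ tentA x w t := tent_nonneg' x w t
      have hAt0 : 0 ≤ A * tentA x w t := mul_nonneg hApos.le htnn
      rcases le_or_gt (|(t:ℝ) - (x:ℝ)|) w with h5 | h5
      · have o3 := abs_le.1 (hww3 t (h5.trans hw_3))
        have o4 := abs_le.1 (hww4 t (h5.trans hw_4))
        have ht1 : tentA x w t ≤ 1 := tent_le_one' x w hwpos t
        have hAt : A * tentA x w t ≤ A := mul_le_of_le_one_right hApos.le ht1
        rw [happ, abs_le]
        constructor
        · linarith
        · linarith
      · have h0 : tentA x w t = 0 := tent_eq_zero' x w hwpos t h5.le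
        rw [happ, h0, abs_le]
        constructor
        · linarith
        · linarith
    have h1 := norm_add_le (f m - (f j + A • tentA x w)) ((f j + A • tentA x w) - f i)
    rw [sub_add_sub_cancel] at h1
    have : ‖f m - f i‖ ≤ δ + ((N:ℝ) - δ0'/8) := by linarith
    linarith
  have hG2 : ‖g m - g i‖ < (N:ℝ) := hth' m i N hF2
  -- attainment of the norm
  obtain ⟨z, hz⟩ := exists_norm_apply (g m - g j)
  have hz' : |g m z - g j z| = ‖g m - g j‖ := by simpa using hz
  obtain ⟨xz, hxzdef⟩ : ∃ xz : I, xz = χ0 z := ⟨_, rfl⟩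
  have hPz : ∀ i', |g i' z - f i' xz| ≤ K := hxzdef ▸ hχ0 z
  have aPm := abs_le.1 (hPz m)
  have aPj := abs_le.1 (hPz j)
  have hum : |f m xz - (f j + A • tentA x w) xz| ≤ δ :=
    (sub_apply_le (f m) (f j + A • tentA x w) xz).trans hm
  have huxz : (f j + A • tentA x w) xz = f j xz + A * tentA x w xz := by simp
  rw [huxz] at hum
  have hum' := abs_le.1 hum
  have htzz : 0 ≤ tentA x w xz := tent_nonneg' x w xz
  have hAtz : 0 ≤ A * tentA x w xz := mul_nonneg hApos.le htzz
  -- localization of the maximum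
  have hloc : |(xz:ℝ) - (x:ℝ)| ≤ w := by
    by_contra hcon
    push_neg at hcon
    have h0 : tentA x w xz = 0 := tent_eq_zero' x w hwpos xz hcon.le
    have humz : |f m xz - f j xz| ≤ δ := by
      have h' := hum
      rw [h0] at h'
      simpa using h'
    have humz' := abs_le.1 humz
    have hcomb : |g m z - g j z| ≤ 2*K + δ := by
      rw [abs_le]
      constructor
      · linarith [aPm.1, aPj.2, humz'.1]
      · linarith [aPm.2, aPj.1, humz'.2]
    rw [hz'] at hcomb
    linarith
  -- the maximum is on the positive side
  have hsign : (N:ℝ) ≤ g m z - g j z := by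
    rcases le_or_gt (g m z - g j z) 0 with hs | hs
    · exfalso
      have habs : |g m z - g j z| = -(g m z - g j z) := abs_of_nonpos hs
      have hbig : (N:ℝ) ≤ g j z - g m z := by
        rw [habs] at hz'; linarith
      linarith [aPm.1, aPj.2, hum'.1, hAtz]
    · have habs : |g m z - g j z| = g m z - g j z := abs_of_pos hs
      rw [habs] at hz'; linarith
  -- comparison at z
  have hgiz : g j z ≤ g i z := by
    have h6 := abs_le.1 (sub_apply_le (g m) (g i) z)
    linarith
  -- transfer back to ψ0 x
  have hzeq : z = ψ0 xz := uniq_y xz z (ψ0 xz) hPz (hψ0 xz)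
  have e1 := abs_le.1 (hww1 xz (hloc.trans hw_1))
  have e2 := abs_le.1 (hww2 xz (hloc.trans hw_2))
  rw [hzeq] at hgiz
  linarith [e1.1, e1.2, e2.1, e2.2]



theorem final
    (f g : ℕ → C(unitInterval, ℝ))
    (hf : DenseRange f) (hg : DenseRange g)
    (h : ∀ i j : ℕ, ⌊‖f i - f j‖⌋ = ⌊‖g i - g j‖⌋) :
    ∃ ψ : unitInterval ≃ₜ unitInterval,
      (∀ i j : ℕ, ∀ x : unitInterval, f i x > f j x → g i (ψ x) ≥ g j (ψ x)) ∨
      (∀ i j : ℕ, ∀ x : unitInterval, f i x > f j x → g i (ψ x) ≤ g j (ψ x)) := by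
  -- norm transfer facts
  have hub : ∀ i j, ‖g i - g j‖ < ‖f i - f j‖ + 1 := by
    intro i j
    calc ‖g i - g j‖ < ⌊‖g i - g j‖⌋ + 1 := Int.lt_floor_add_one _
      _ = ⌊‖f i - f j‖⌋ + 1 := by rw [h i j]
      _ ≤ ‖f i - f j‖ + 1 := by have := Int.floor_le ‖f i - f j‖; linarith
  have hlb : ∀ i j, ‖f i - f j‖ - 1 < ‖g i - g j‖ := by
    intro i j
    have h1 : ‖f i - f j‖ < ⌊‖f i - f j‖⌋ + 1 := Int.lt_floor_add_one _
    have h2 : (⌊‖g i - g j‖⌋ : ℝ) ≤ ‖g i - g j‖ := Int.floor_le _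
    rw [h i j] at h1
    linarith
  have hub2 : ∀ i j, ‖f i - f j‖ < ‖g i - g j‖ + 1 := fun i j => by
    have := hlb i j; linarith
  have hlb2 : ∀ i j, ‖g i - g j‖ - 1 < ‖f i - f j‖ := fun i j => by
    have := hub i j; linarith
  have hth : ∀ i j : ℕ, ∀ N : ℤ, (N : ℝ) ≤ ‖f i - f j‖ → (N : ℝ) ≤ ‖g i - g j‖ := by
    intro i j N hN
    have h1 : N ≤ ⌊‖f i - f j‖⌋ := Int.le_floor.2 hN
    rw [h i j] at h1
    exact Int.le_floor.1 h1
  have hth' : ∀ i j : ℕ, ∀ N : ℤ, ‖f i - f j‖ < (N : ℝ) → ‖g i - g j‖ < (N : ℝ) := by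
    intro i j N hN
    have h1 : ⌊‖f i - f j‖⌋ < N := Int.floor_lt.2 hN
    rw [h i j] at h1
    exact Int.floor_lt.1 h1
  -- reference indices
  obtain ⟨i0, hi0⟩ := exists_close hf 0 1 one_pos
  rw [sub_zero] at hi0
  obtain ⟨j0, hj0⟩ := exists_close hg 0 1 one_pos
  rw [sub_zero] at hj0
  obtain ⟨K, hKdef⟩ : ∃ K : ℝ, K = ‖g i0‖ + ‖f j0‖ + 5 := ⟨_, rfl⟩
  have hK : 0 ≤ K := by
    rw [hKdef]; positivity
  have hK1 : ‖g i0‖ + 5 ≤ K := by rw [hKdef]; have := norm_nonneg (f j0); linarith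
  have hK2 : ‖f j0‖ + 5 ≤ K := by rw [hKdef]; have := norm_nonneg (g i0); linarith
  -- shadows in both directions
  have covP : ∀ x : I, ∃ y : I, (∀ i, |g i y - f i x| ≤ K) ∨ (∀ i, |g i y + f i x| ≤ K) := by
    intro x
    obtain ⟨y, hy⟩ := shadow_full f g hf hub hlb i0 hi0 x
    exact ⟨y, hy.imp (fun hl i => (hl i).trans hK1) (fun hr i => (hr i).trans hK1)⟩
  have covG : ∀ y : I, ∃ x : I, (∀ i, |g i y - f i x| ≤ K) ∨ (∀ i, |g i y + f i x| ≤ K) := by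
    intro y
    obtain ⟨x, hx⟩ := shadow_full g f hg hub2 hlb2 j0 hj0 y
    refine ⟨x, hx.imp (fun hl i => ?_) (fun hr i => ?_)⟩
    · rw [abs_sub_comm]; exact (hl i).trans hK2
    · rw [show g i y + f i x = f i x + g i y from add_comm _ _]; exact (hr i).trans hK2
  -- no point has shadows of both signs
  have kill : ∀ (x1 x2 y : I), (∀ i, |g i y - f i x1| ≤ K) → (∀ i, |g i y + f i x2| ≤ K) →
      False := by
    intro x1 x2 y h1 h2
    obtain ⟨i, hi⟩ := exists_close hf (ContinuousMap.const I (2*K+1)) (1/4) (by norm_num)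
    have e1 : |f i x1 - (2*K+1)| ≤ 1/4 := by
      have := (sub_apply_le (f i) (ContinuousMap.const I (2*K+1)) x1).trans hi
      simpa using this
    have e2 : |f i x2 - (2*K+1)| ≤ 1/4 := by
      have := (sub_apply_le (f i) (ContinuousMap.const I (2*K+1)) x2).trans hi
      simpa using this
    have a1 := abs_le.1 (h1 i)
    have a2 := abs_le.1 (h2 i)
    have b1 := abs_le.1 e1
    have b2 := abs_le.1 e2
    linarith
  -- the two closed sets of shadow targets
  obtain ⟨Yp, hYpdef⟩ : ∃ Yp : Set I, Yp = {y : I | ∃ x : I, ∀ i, |g i y - f i x| ≤ K} :=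
    ⟨_, rfl⟩
  obtain ⟨Ym, hYmdef⟩ : ∃ Ym : Set I, Ym = {y : I | ∃ x : I, ∀ i, |g i y + f i x| ≤ K} :=
    ⟨_, rfl⟩
  have hYpc : IsClosed Yp := by
    rw [hYpdef]
    have himg : {y : I | ∃ x : I, ∀ i, |g i y - f i x| ≤ K} =
        Prod.snd '' {p : I × I | ∀ i, |g i p.2 - f i p.1| ≤ K} := by
      ext y
      constructor
      · rintro ⟨x, hx⟩; exact ⟨(x, y), hx, rfl⟩
      · rintro ⟨p, hp, rfl⟩; exact ⟨p.1, hp⟩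
    rw [himg]
    refine isClosedMap_snd_of_compactSpace _ ?_
    have : {p : I × I | ∀ i, |g i p.2 - f i p.1| ≤ K}
        = ⋂ i, {p : I × I | |g i p.2 - f i p.1| ≤ K} := by ext p; simp
    rw [this]
    exact isClosed_iInter fun i => isClosed_le
      (((g i).continuous.comp continuous_snd).sub
        ((f i).continuous.comp continuous_fst)).abs continuous_const
  have hYmc : IsClosed Ym := by
    rw [hYmdef]
    have himg : {y : I | ∃ x : I, ∀ i, |g i y + f i x| ≤ K} =
        Prod.snd '' {p : I × I | ∀ i, |g i p.2 + f i p.1| ≤ K} := by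
      ext y
      constructor
      · rintro ⟨x, hx⟩; exact ⟨(x, y), hx, rfl⟩
      · rintro ⟨p, hp, rfl⟩; exact ⟨p.1, hp⟩
    rw [himg]
    refine isClosedMap_snd_of_compactSpace _ ?_
    have : {p : I × I | ∀ i, |g i p.2 + f i p.1| ≤ K}
        = ⋂ i, {p : I × I | |g i p.2 + f i p.1| ≤ K} := by ext p; simp
    rw [this]
    exact isClosed_iInter fun i => isClosed_le
      (((g i).continuous.comp continuous_snd).add
        ((f i).continuous.comp continuous_fst)).abs continuous_const
  have hcompl : Yp = Ymᶜ := by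
    ext y
    constructor
    · intro hy
      rw [hYpdef] at hy
      obtain ⟨x1, hx1⟩ := hy
      intro hy2
      rw [hYmdef] at hy2
      obtain ⟨x2, hx2⟩ := hy2
      exact kill x1 x2 y hx1 hx2
    · intro hy
      rcases covG y with ⟨x, hx | hx⟩
      · rw [hYpdef]; exact ⟨x, hx⟩
      · exact absurd (by rw [hYmdef]; exact ⟨x, hx⟩) hy
  have hclopen : IsClopen Yp := ⟨hYpc, by rw [hcompl]; exact hYmc.isOpen_compl⟩
  rcases isClopen_iff.1 hclopen with hYpe | hYpu
  · -- Yp is empty : the order-reversing case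
    obtain ⟨g', hg'def⟩ : ∃ g' : ℕ → C(I, ℝ), g' = fun i => -(g i) := ⟨_, rfl⟩
    have hg'app : ∀ i (y : I), g' i y = -(g i y) := by
      intro i y; rw [hg'def]; simp
    have hg' : DenseRange g' := by
      rw [hg'def]
      have hsurj : Function.Surjective (fun u : C(I, ℝ) => -u) := fun u => ⟨-u, by simp⟩
      exact hsurj.denseRange.comp hg continuous_neg
    have hnorm' : ∀ i j, ‖g' i - g' j‖ = ‖g i - g j‖ := by
      intro i j
      rw [hg'def]
      simp only
      rw [neg_sub_neg, norm_sub_rev]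
    have hth2 : ∀ i j : ℕ, ∀ N : ℤ, (N : ℝ) ≤ ‖f i - f j‖ → (N : ℝ) ≤ ‖g' i - g' j‖ := by
      intro i j N hN; rw [hnorm']; exact hth i j N hN
    have hth2' : ∀ i j : ℕ, ∀ N : ℤ, ‖f i - f j‖ < (N : ℝ) → ‖g' i - g' j‖ < (N : ℝ) := by
      intro i j N hN; rw [hnorm']; exact hth' i j N hN
    have cov1' : ∀ x : I, ∃ y : I, ∀ i, |g' i y - f i x| ≤ K := by
      intro x
      rcases covP x with ⟨y, hy | hy⟩
      · exfalso
        have hyYp : y ∈ Yp := by rw [hYpdef]; exact ⟨x, hy⟩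
        rw [hYpe] at hyYp
        exact Set.notMem_empty y hyYp
      · refine ⟨y, fun i => ?_⟩
        rw [hg'app]
        have : -(g i y) - f i x = -(g i y + f i x) := by ring
        rw [this, abs_neg]
        exact hy i
    have cov2' : ∀ y : I, ∃ x : I, ∀ i, |g' i y - f i x| ≤ K := by
      intro y
      rcases covG y with ⟨x, hx | hx⟩
      · exfalso
        have hyYp : y ∈ Yp := by rw [hYpdef]; exact ⟨x, hx⟩
        rw [hYpe] at hyYp
        exact Set.notMem_empty y hyYp
      · refine ⟨x, fun i => ?_⟩
        rw [hg'app]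
        have : -(g i y) - f i x = -(g i y + f i x) := by ring
        rw [this, abs_neg]
        exact hx i
    obtain ⟨ψ, hψ⟩ := main_pos f g' hf hg' hth2 hth2' K hK cov1' cov2'
    refine ⟨ψ, Or.inr fun i j x hx => ?_⟩
    have := hψ i j x hx
    rw [hg'app, hg'app] at this
    linarith
  · -- Yp is everything : the order-preserving case
    have cov1 : ∀ x : I, ∃ y : I, ∀ i, |g i y - f i x| ≤ K := by
      intro x
      rcases covP x with ⟨y, hy | hy⟩
      · exact ⟨y, hy⟩
      · exfalso
        have hyYm : y ∈ Ym := by rw [hYmdef]; exact ⟨x, hy⟩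
        have hyYp : y ∈ Yp := by rw [hYpu]; trivial
        rw [hcompl] at hyYp
        exact hyYp hyYm
    have cov2 : ∀ y : I, ∃ x : I, ∀ i, |g i y - f i x| ≤ K := by
      intro y
      have hyYp : y ∈ Yp := by rw [hYpu]; trivial
      rw [hYpdef] at hyYp
      exact hyYp
    obtain ⟨ψ, hψ⟩ := main_pos f g hf hg hth hth' K hK cov1 cov2
    exact ⟨ψ, Or.inl hψ⟩

end StepIsoAux

end StepIso

noncomputable section

/-- If two dense sequences in `C[0,1]` are step-isometric (the floors of pairwise sup-norm
distances agree), then there is a self-homeomorphism `ψ` of `[0,1]` which is uniformly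
order-preserving or uniformly order-reversing on the values of the two families. -/
theorem step_isometric_dense_sequences_order
    (f g : ℕ → C(unitInterval, ℝ))
    (hf : DenseRange f) (hg : DenseRange g)
    (h : ∀ i j : ℕ, ⌊‖f i - f j‖⌋ = ⌊‖g i - g j‖⌋) :
    ∃ ψ : unitInterval ≃ₜ unitInterval,
      (∀ i j : ℕ, ∀ x : unitInterval, f i x > f j x → g i (ψ x) ≥ g j (ψ x)) ∨
      (∀ i j : ℕ, ∀ x : unitInterval, f i x > f j x → g i (ψ x) ≤ g j (ψ x)) :=
  StepIsoAux.final f g hf hg h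

end
end

section
/- Let (f_n)_{n∈ℕ} be an injective sequence in C[0,1] whose image is an IC-dense set, and let (g_n)_{n∈ℕ} be an injective sequence in C[0,1] whose image is a smoothly dense set, every element of which is the restriction to [0,1] of a real polynomial function. Then there is no bijection π : ℕ → ℕ such that ⌊‖f_i − f_j‖⌋ = ⌊‖g_{π(i)} − g_{π(j)}‖⌋ for all i, j. (This is the deterministic core of the paper's Corollary 4.5, that the graphs GR(ICD) and GR(SD) are non-isomorphic.) -/
open Set unitInterval

noncomputable section

/-- The crossing set of two continuous functions on `[0,1]`: points where the
fractional parts agree. -/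
def cr (f g : C(unitInterval, ℝ)) : Set unitInterval :=
  {x | Int.fract (f x) = Int.fract (g x)}

/-- The crossing sets of distinct (unordered) pairs from `V` are pairwise disjoint. -/
def PairwiseDisjointCr (V : Set C(unitInterval, ℝ)) : Prop :=
  ∀ f g f' g' : C(unitInterval, ℝ), f ∈ V → g ∈ V → f' ∈ V → g' ∈ V →
    f ≠ g → f' ≠ g' → ({f, g} : Set C(unitInterval, ℝ)) ≠ {f', g'} →
    Disjoint (cr f g) (cr f' g')

/-- A transverse subset of `C[0,1]`. -/
def Transverse (V : Set C(unitInterval, ℝ)) : Prop :=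
  PairwiseDisjointCr V ∧
  ∀ f g : C(unitInterval, ℝ), f ∈ V → g ∈ V → f ≠ g →
    (cr f g).Finite ∧ (0 : unitInterval) ∉ cr f g ∧ (1 : unitInterval) ∉ cr f g ∧
    ∀ x ∈ cr f g, ¬ IsLocalExtr (fun t : unitInterval => f t - g t) x

/-- `A ∼_ε B` : the sets `A` and `B` have the same cardinality and their increasing
enumerations agree to within `ε`; equivalently, there is an order isomorphism
moving no point by more than `ε`. -/
def ApproxEq (ε : ℝ) (A B : Set unitInterval) : Prop :=
  ∃ e : A ≃o B, ∀ a : A, |((e a : unitInterval) : ℝ) - ((a : unitInterval) : ℝ)| ≤ ε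

/-- A smoothly dense subset of `C[0,1]`. -/
def SmoothlyDense (V : Set C(unitInterval, ℝ)) : Prop :=
  V.Countable ∧ Dense V ∧ Transverse V ∧
  (∀ f ∈ V, ∃ K : NNReal, LipschitzWith K f) ∧
  ∀ F : Finset C(unitInterval, ℝ), ↑F ⊆ V →
    ∀ f : C(unitInterval, ℝ), Transverse (insert f (↑F : Set C(unitInterval, ℝ))) →
    ∀ ε : ℝ, 0 < ε →
      ∃ g ∈ V, ‖f - g‖ < ε ∧ ∀ h ∈ F, ApproxEq ε (cr f h) (cr g h)

/-- An infinite crossing dense (IC-dense) subset of `C[0,1]`. -/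
def ICDense (V : Set C(unitInterval, ℝ)) : Prop :=
  V.Countable ∧ Dense V ∧ PairwiseDisjointCr V ∧
  (∀ f g : C(unitInterval, ℝ), f ∈ V → g ∈ V → f ≠ g →
    (0 : unitInterval) ∉ cr f g ∧ (1 : unitInterval) ∉ cr f g) ∧
  ∀ f g : C(unitInterval, ℝ), f ∈ V → g ∈ V → f ≠ g →
    ∀ x : unitInterval, (x : ℝ) ∈ Set.Ioo (0 : ℝ) 1 →
      Int.fract (f x) = Int.fract (g x) →
      ∃ u : ℕ → unitInterval,
        (Monotone u ∨ Antitone u) ∧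
        Filter.Tendsto u Filter.atTop (nhds x) ∧
        ∀ n : ℕ,
          Int.fract (f (u (2 * n))) < Int.fract (g (u (2 * n))) ∧
          Int.fract (g (u (2 * n + 1))) < Int.fract (f (u (2 * n + 1)))

/-!
Take `f i₀ ≈ 1/2` and `f j₀ ≈ -x` in the IC-dense family, so that `d = f i₀ - f j₀` crosses the
level `1` inside `(0, 1)`; by IC-density `d - 1` changes sign infinitely often near the crossing.
Bumps of height `7/2` over `f j₀` on disjoint windows of this oscillation give probes `f (k n)`.
All that is used about them is the presence or absence of gaps
`∃ x, ∀ i j, m - a i - b j < u i x - v j x`, and in a dense family these are determined, up to a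
global sign, by integer parts of sup-distances (pairwise meeting sup-norm balls have a common
point). A step-isometry therefore carries them to `g ∘ π`, where a connectedness argument gives
each probe its own point with `|g (π i₀) - g (π j₀)| = 1`: infinitely many crossings of two
members of a transverse set.
-/

open Filter Topology

section SupNorm

variable {α : Type*} [TopologicalSpace α] [CompactSpace α] {ι κ : Type*}

theorem ContinuousMap.exists_abs_apply_eq_norm [Nonempty α] (φ : C(α, ℝ)) :
    ∃ x, |φ x| = ‖φ‖ := by
  obtain ⟨x, -, hx⟩ := isCompact_univ.exists_isMaxOn univ_nonempty
    (continuous_abs.comp φ.continuous).continuousOn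
  refine ⟨x, le_antisymm (by simpa using φ.norm_coe_le_norm x) ?_⟩
  exact (φ.norm_le (abs_nonneg _)).2 fun y => by simpa using hx (mem_univ y)

/-- The pointwise minimum of the `u i + r i` lies in all the balls (Helly property of the sup
norm). -/
theorem ContinuousMap.exists_forall_norm_sub_le [Finite ι] [Nonempty ι] (u : ι → C(α, ℝ))
    (r : ι → ℝ) (h : ∀ i i', ‖u i - u i'‖ ≤ r i + r i') (x : α) :
    ∃ ζ : C(α, ℝ), (∀ i, ‖ζ - u i‖ ≤ r i) ∧ ∃ i, ζ x = u i x + r i := by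
  have := Fintype.ofFinite ι
  let ζ : C(α, ℝ) := Finset.univ.inf' Finset.univ_nonempty fun i => u i + const α (r i)
  have hζ : ∀ y, ζ y = Finset.univ.inf' Finset.univ_nonempty fun i => u i y + r i := fun y => by
    simp [ζ, inf'_apply]
  refine ⟨ζ, fun i => ?_, ?_⟩
  · have hr : 0 ≤ r i := by linarith [h i i, norm_nonneg (u i - u i)]
    refine (norm_le _ hr).2 fun y => ?_
    rw [sub_apply, hζ, Real.norm_eq_abs, abs_le]
    constructor
    · have : u i y - r i ≤ Finset.univ.inf' Finset.univ_nonempty fun i => u i y + r i :=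
        Finset.le_inf' _ _ fun i' _ => by
          linarith [apply_le_norm (u i - u i') y, h i i', sub_apply (u i) (u i') y]
      linarith
    · linarith [Finset.inf'_le (fun i => u i y + r i) (Finset.mem_univ i)]
  · obtain ⟨i, -, hi⟩ := Finset.exists_mem_eq_inf' Finset.univ_nonempty fun i => u i x + r i
    exact ⟨i, (hζ x).trans hi⟩

/-- Shrink all radii by a small `ε`, take the common points of both families of balls given by
`ContinuousMap.exists_forall_norm_sub_le` and approximate them by members of `s`. -/
theorem DenseRange.exists_norm_sub_lt_of_lt_sub [Finite ι] [Nonempty ι] [Finite κ] [Nonempty κ]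
    {β : Type*} {s : β → C(α, ℝ)} (hs : DenseRange s) {u : ι → C(α, ℝ)} {r : ι → ℝ}
    {v : κ → C(α, ℝ)} {ρ : κ → ℝ} (hu : ∀ i i', ‖u i - u i'‖ < r i + r i')
    (hv : ∀ j j', ‖v j - v j'‖ < ρ j + ρ j') {m : ℝ} {x : α}
    (hx : ∀ i j, m - r i - ρ j < u i x - v j x) :
    ∃ n₁ n₂, (∀ i, ‖s n₁ - u i‖ < r i) ∧ (∀ j, ‖s n₂ - v j‖ < ρ j) ∧ m < s n₁ x - s n₂ x := by
  have small : ∀ {c d : ℝ}, c < d → ∀ᶠ ε in 𝓝[>] (0 : ℝ), c + 4 * ε < d := fun h =>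
    (tendsto_nhdsWithin_of_tendsto_nhds
      (Continuous.tendsto' (by fun_prop) 0 _ (by simp))).eventually (eventually_lt_nhds h)
  obtain ⟨ε, ⟨⟨h₁, h₂⟩, h₃⟩, hε⟩ := (((eventually_all.2 fun i => eventually_all.2 fun i' =>
    small (hu i i')).and (eventually_all.2 fun j => eventually_all.2 fun j' =>
    small (hv j j'))).and (eventually_all.2 fun i => eventually_all.2 fun j =>
    small (hx i j))).and self_mem_nhdsWithin |>.exists
  obtain ⟨ζ₁, hζ₁, i₁, hi₁⟩ := ContinuousMap.exists_forall_norm_sub_le u (r · - ε)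
    (fun i i' => by linarith [h₁ i i']) x
  obtain ⟨ζ₂, hζ₂, j₁, hj₁⟩ := ContinuousMap.exists_forall_norm_sub_le (-v ·) (ρ · - ε)
    (fun j j' => by rw [neg_sub_neg, norm_sub_rev]; linarith [h₂ j j']) x
  obtain ⟨n₁, hn₁⟩ := hs.exists_dist_lt ζ₁ hε
  obtain ⟨n₂, hn₂⟩ := hs.exists_dist_lt (-ζ₂) hε
  rw [dist_comm, dist_eq_norm] at hn₁ hn₂
  refine ⟨n₁, n₂, fun i => ?_, fun j => ?_, ?_⟩
  · linarith [norm_sub_le_norm_sub_add_norm_sub (s n₁) ζ₁ (u i), hζ₁ i]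
  · have := norm_sub_le (s n₂ - -ζ₂) (ζ₂ - -v j)
    rw [show s n₂ - -ζ₂ - (ζ₂ - -v j) = s n₂ - v j by abel] at this
    linarith [hζ₂ j]
  · have e₁ := (s n₁ - ζ₁).neg_norm_le_apply x
    have e₂ := (s n₂ - -ζ₂).apply_le_norm x
    simp only [ContinuousMap.sub_apply, ContinuousMap.neg_apply] at e₁ e₂ hi₁ hj₁
    linarith [h₃ i₁ j₁]

theorem ContinuousMap.exists_lt_sub_of_norm_sub_lt [Nonempty α] {w₁ w₂ : C(α, ℝ)}
    {u : ι → C(α, ℝ)} {r : ι → ℝ} {v : κ → C(α, ℝ)} {ρ : κ → ℝ} (hu : ∀ i, ‖w₁ - u i‖ < r i)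
    (hv : ∀ j, ‖w₂ - v j‖ < ρ j) {m : ℝ} (hm : m ≤ ‖w₁ - w₂‖) :
    ∃ x, (∀ i j, m - r i - ρ j < u i x - v j x) ∨ (∀ i j, m - r i - ρ j < v j x - u i x) := by
  obtain ⟨x, hx⟩ := (w₁ - w₂).exists_abs_apply_eq_norm
  have hu' := fun i => abs_lt.1 (((w₁ - u i).norm_coe_le_norm x).trans_lt (hu i))
  have hv' := fun j => abs_lt.1 (((w₂ - v j).norm_coe_le_norm x).trans_lt (hv j))
  simp only [ContinuousMap.sub_apply] at hx hu' hv'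
  refine ⟨x, (abs_cases (w₁ x - w₂ x)).imp (fun h i j => ?_) (fun h i j => ?_)⟩
  · linarith [hu' i, hv' j]
  · linarith [hu' i, hv' j]

theorem DenseRange.exists_forall_abs_sub_lt {β : Type*} {s : β → C(α, ℝ)} (hs : DenseRange s)
    (ψ : C(α, ℝ)) {ε : ℝ} (hε : 0 < ε) : ∃ n, ∀ y, |s n y - ψ y| < ε := by
  obtain ⟨n, hn⟩ := hs.exists_dist_lt ψ hε
  exact ⟨n, fun y => by
    simpa [Real.dist_eq, abs_sub_comm] using (ContinuousMap.dist_apply_le_dist y).trans_lt hn⟩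

end SupNorm

section EnvelopeGap

variable {α : Type*} [TopologicalSpace α] [CompactSpace α] {ι κ : Type*}

def EnvelopeGap (u : ι → C(α, ℝ)) (a : ι → ℤ) (v : κ → C(α, ℝ)) (b : κ → ℤ) (m : ℤ)
    (x : α) : Prop :=
  ∀ i j, (m - a i - b j : ℝ) < u i x - v j x

/-- A gap is witnessed by members `s n₁`, `s n₂` within `a i` of the `u i`, within `b j` of the
`v j`, and at distance at least `m`. These conditions only involve integer parts of distances, so
they pass to `t`, where conversely they force a gap of one of the two signs. -/
theorem exists_envelopeGap_of_floor_norm_sub_eq [Finite ι] [Nonempty ι] [Finite κ] [Nonempty κ]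
    {s t : ℕ → C(α, ℝ)} (hs : DenseRange s)
    (hst : ∀ n n', ⌊‖s n - s n'‖⌋ = ⌊‖t n - t n'‖⌋) {p : ι → ℕ} {q : κ → ℕ} {a : ι → ℤ}
    {b : κ → ℤ} {m : ℤ} (hp : ∀ i i', ‖s (p i) - s (p i')‖ < a i + a i')
    (hq : ∀ j j', ‖s (q j) - s (q j')‖ < b j + b j') {x : α}
    (hx : EnvelopeGap (s ∘ p) a (s ∘ q) b m x) :
    ∃ y, EnvelopeGap (t ∘ p) a (t ∘ q) b m y ∨ EnvelopeGap (t ∘ q) b (t ∘ p) a m y := by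
  have : Nonempty α := ⟨x⟩
  obtain ⟨n₁, n₂, h₁, h₂, h₁₂⟩ := hs.exists_norm_sub_lt_of_lt_sub (u := s ∘ p)
    (r := fun i => (a i : ℝ)) (v := s ∘ q) (ρ := fun j => (b j : ℝ)) hp hq hx
  have norm_lt : ∀ n n' (c : ℤ), ‖s n - s n'‖ < c → ‖t n - t n'‖ < c := fun n n' c h =>
    Int.floor_lt.1 (hst n n' ▸ Int.floor_lt.2 h)
  have hm : (m : ℝ) ≤ ‖t n₁ - t n₂‖ := by
    refine Int.le_floor.1 (hst n₁ n₂ ▸ Int.le_floor.2 ?_)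
    linarith [(s n₁ - s n₂).apply_le_norm x, ContinuousMap.sub_apply (s n₁) (s n₂) x]
  obtain ⟨y, hy | hy⟩ := ContinuousMap.exists_lt_sub_of_norm_sub_lt
    (fun i => norm_lt _ _ _ (h₁ i)) (fun j => norm_lt _ _ _ (h₂ j)) hm
  · exact ⟨y, Or.inl hy⟩
  · exact ⟨y, Or.inr fun j i => by simpa [sub_right_comm] using hy i j⟩

theorem exists_envelopeGap_of_mem [Finite ι] [Nonempty ι] [Finite κ] [Nonempty κ]
    {s t : ℕ → C(α, ℝ)} (hs : DenseRange s) (hst : ∀ n n', ⌊‖s n - s n'‖⌋ = ⌊‖t n - t n'‖⌋)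
    {S : Set ℕ} (hS : ∀ n ∈ S, ∀ n' ∈ S, ‖s n - s n'‖ < 8) {p : ι → ℕ} {q : κ → ℕ}
    (hp : ∀ i, p i ∈ S) (hq : ∀ j, q j ∈ S) {a : ι → ℤ} {b : κ → ℤ} (ha : ∀ i, 4 ≤ a i)
    (hb : ∀ j, 4 ≤ b j) {m : ℤ} {x : α} (hx : EnvelopeGap (s ∘ p) a (s ∘ q) b m x) :
    ∃ y, EnvelopeGap (t ∘ p) a (t ∘ q) b m y ∨ EnvelopeGap (t ∘ q) b (t ∘ p) a m y := by
  refine exists_envelopeGap_of_floor_norm_sub_eq hs hst (fun i i' => ?_) (fun j j' => ?_) hx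
  · have : (8 : ℝ) ≤ a i + a i' := by exact_mod_cast (by linarith [ha i, ha i'] : (8 : ℤ) ≤ _)
    linarith [hS _ (hp i) _ (hp i')]
  · have : (8 : ℝ) ≤ b j + b j' := by exact_mod_cast (by linarith [hb j, hb j'] : (8 : ℤ) ≤ _)
    linarith [hS _ (hq j) _ (hq j')]

theorem not_envelopeGap_of_mem [Finite ι] [Nonempty ι] [Finite κ] [Nonempty κ]
    {s t : ℕ → C(α, ℝ)} (hs : DenseRange s) (hst : ∀ n n', ⌊‖s n - s n'‖⌋ = ⌊‖t n - t n'‖⌋)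
    {S : Set ℕ} (hS : ∀ n ∈ S, ∀ n' ∈ S, ‖s n - s n'‖ < 8) {p : ι → ℕ} {q : κ → ℕ}
    (hp : ∀ i, p i ∈ S) (hq : ∀ j, q j ∈ S) {a : ι → ℤ} {b : κ → ℤ} (ha : ∀ i, 4 ≤ a i)
    (hb : ∀ j, 4 ≤ b j) {m : ℤ}
    (h : ∀ y, ¬ EnvelopeGap (t ∘ p) a (t ∘ q) b m y ∧ ¬ EnvelopeGap (t ∘ q) b (t ∘ p) a m y)
    (x : α) : ¬ EnvelopeGap (s ∘ p) a (s ∘ q) b m x := fun hx => by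
  obtain ⟨y, hy | hy⟩ := exists_envelopeGap_of_mem hs hst hS hp hq ha hb hx
  exacts [(h y).1 hy, (h y).2 hy]

end EnvelopeGap

section Crossings

variable {X : Type*} [TopologicalSpace X] [PreconnectedSpace X] {D : X → ℝ}

/-- Otherwise `{1 < D, 2 < E}` and `{D < 1} ∪ {E < 2}` would disconnect `X`. -/
theorem exists_eq_one_two_le_of_ne_two {E : X → ℝ} (hD : Continuous D) (hE : Continuous E)
    (hgap : ∀ y, 1 < D y → E y ≠ 2) (hα : ∃ x, 1 < D x ∧ 2 < E x)
    (hβ : ∃ x, D x < 1 ∨ E x < 2) : ∃ c, D c = 1 ∧ 2 ≤ E c := by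
  by_contra! h
  obtain ⟨z, -, ⟨hz₁, hz₂⟩, hz⟩ := isPreconnected_univ (α := X)
    {y | 1 < D y ∧ 2 < E y} {y | D y < 1 ∨ E y < 2}
    ((isOpen_lt continuous_const hD).inter (isOpen_lt continuous_const hE))
    ((isOpen_lt hD continuous_const).union (isOpen_lt hE continuous_const))
    (fun y _ => by
      rcases lt_trichotomy (D y) 1 with hy | hy | hy
      · exact Or.inr (Or.inl hy)
      · exact Or.inr (Or.inr (h y hy))
      · rcases lt_trichotomy (E y) 2 with hy' | hy' | hy'
        exacts [Or.inr (Or.inr hy'), absurd hy' (hgap y hy), Or.inl ⟨hy, hy'⟩])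
    (hα.imp fun x hx => ⟨mem_univ x, hx⟩) (hβ.imp fun x hx => ⟨mem_univ x, hx⟩)
  rcases hz with hz | hz <;> linarith

theorem exists_abs_eq_one_of_ne_two {E : X → ℝ} (hD : Continuous D) (hE : Continuous E)
    (hgap : ∀ y, 1 < D y → E y ≠ 2) (hgap' : ∀ y, D y < -1 → E y ≠ -2)
    (hα : ∃ x, (1 < D x ∧ 2 < E x) ∨ (D x < -1 ∧ E x < -2))
    (hβ : ∃ x, (D x < 1 ∧ 2 < E x) ∨ (-1 < D x ∧ E x < -2)) :
    ∃ c, (D c = 1 ∧ 2 ≤ E c) ∨ (D c = -1 ∧ E c ≤ -2) := by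
  obtain ⟨x, hx | hx⟩ := hα
  · obtain ⟨c, hc⟩ := exists_eq_one_two_le_of_ne_two hD hE hgap ⟨x, hx⟩
      (hβ.imp fun y hy => hy.imp And.left fun h => by linarith [h.2])
    exact ⟨c, Or.inl hc⟩
  · obtain ⟨c, hc₁, hc₂⟩ := exists_eq_one_two_le_of_ne_two (D := fun y => -D y)
      (E := fun y => -E y) hD.neg hE.neg (fun y hy h => hgap' y (by linarith) (by linarith))
      ⟨x, by linarith [hx.1], by linarith [hx.2]⟩
      (hβ.imp fun y hy => hy.elim (fun h => Or.inr (by linarith [h.2]))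
        fun h => Or.inl (by linarith [h.1]))
    exact ⟨c, Or.inr ⟨by linarith, by linarith⟩⟩

/-- The crossings found for different `n` are distinct, because no two `E n` exceed `1`, or stay
below `-1`, at the same point. -/
theorem infinite_setOf_abs_eq_one {E : ℕ → X → ℝ} (hD : Continuous D)
    (hE : ∀ n, Continuous (E n)) (hgap : ∀ n y, 1 < D y → E n y ≠ 2)
    (hgap' : ∀ n y, D y < -1 → E n y ≠ -2)
    (hα : ∀ n, ∃ x, (1 < D x ∧ 2 < E n x) ∨ (D x < -1 ∧ E n x < -2))
    (hβ : ∀ n, ∃ x, (D x < 1 ∧ 2 < E n x) ∨ (-1 < D x ∧ E n x < -2))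
    (hdisj : ∀ n n' y, n ≠ n' → 1 < E n y → E n' y ≤ 1)
    (hdisj' : ∀ n n' y, n ≠ n' → E n y < -1 → -1 ≤ E n' y) :
    {y | |D y| = 1}.Infinite := by
  choose c hc using fun n =>
    exists_abs_eq_one_of_ne_two hD (hE n) (hgap n) (hgap' n) (hα n) (hβ n)
  refine Set.infinite_of_injective_forall_mem (f := c) (fun n n' hnn' => ?_) fun n => ?_
  · by_contra hne
    rcases hc n with ⟨h₁, h₂⟩ | ⟨h₁, h₂⟩ <;> rcases hc n' with ⟨h₁', h₂'⟩ | ⟨h₁', h₂'⟩ <;>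
      rw [hnn'] at h₁ h₂
    · linarith [hdisj n n' _ hne (by linarith)]
    · linarith
    · linarith
    · linarith [hdisj' n n' _ hne (by linarith)]
  · rcases hc n with ⟨h, -⟩ | ⟨h, -⟩ <;> simp [h]

end Crossings

theorem Monotone.strictMono_of_alternating {X : Type*} [PartialOrder X] {d : X → ℝ}
    {v : ℕ → X} (hv : Monotone v)
    (halt : ∀ n, d (v (2 * n)) < 1 ∧ 1 < d (v (2 * n + 1))) : StrictMono v :=
  strictMono_nat_of_lt_succ fun n => (hv n.le_succ).lt_of_ne fun h => by
    obtain ⟨m, rfl | rfl⟩ := Nat.even_or_odd' n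
    · linarith [halt m, congrArg d h]
    · have := (halt (m + 1)).1
      rw [show 2 * (m + 1) = 2 * m + 1 + 1 by ring, ← h] at this
      linarith [(halt m).2]

section Bumps

variable {X : Type*} [TopologicalSpace X]

structure IsBumpFamily (d : X → ℝ) (φ : ℕ → X → ℝ) : Prop where
  continuous : ∀ n, Continuous (φ n)
  mem_Icc : ∀ n y, φ n y ∈ Icc (0 : ℝ) 1
  exists_one_lt : ∀ n, ∃ x, 1 < d x ∧ φ n x = 1
  exists_lt_one : ∀ n, ∃ x, d x < 1 ∧ φ n x = 1
  lt_one : ∀ n y, 0 < φ n y → φ n y < 1 → d y < 1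
  eq_zero : ∀ n n' y, n ≠ n' → 0 < φ n y → φ n' y = 0

theorem IsBumpFamily.comp {Y : Type*} [TopologicalSpace Y] {d : X → ℝ} {φ : ℕ → X → ℝ}
    (h : IsBumpFamily d φ) {e : Y → X} (he : Continuous e) (he' : Function.Surjective e) :
    IsBumpFamily (d ∘ e) fun n => φ n ∘ e where
  continuous n := (h.continuous n).comp he
  mem_Icc n y := h.mem_Icc n (e y)
  exists_one_lt n := by
    obtain ⟨x, hx⟩ := h.exists_one_lt n
    obtain ⟨y, rfl⟩ := he' x
    exact ⟨y, hx⟩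
  exists_lt_one n := by
    obtain ⟨x, hx⟩ := h.exists_lt_one n
    obtain ⟨y, rfl⟩ := he' x
    exact ⟨y, hx⟩
  lt_one n y := h.lt_one n (e y)
  eq_zero n n' y := h.eq_zero n n' (e y)

variable [LinearOrder X] [OrderTopology X] {d : X → ℝ}

/-- The `n`-th bump is `1` on `[v (4n+2), v (4n+4)]` and vanishes outside
`(v (4n+1), v (4n+5)) ∩ ((v (4n+2), v (4n+4)) ∪ {d < 1})` (Urysohn). -/
theorem exists_isBumpFamily_of_monotone (hd : Continuous d) {v : ℕ → X} (hv : Monotone v)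
    (halt : ∀ n, d (v (2 * n)) < 1 ∧ 1 < d (v (2 * n + 1))) : ∃ φ, IsBumpFamily d φ := by
  have hsv := hv.strictMono_of_alternating halt
  let O : ℕ → Set X := fun n => Ioo (v (2 * (2 * n) + 1)) (v (2 * (2 * n + 2) + 1)) ∩
    (Ioo (v (2 * (2 * n + 1))) (v (2 * (2 * n + 2))) ∪ {y | d y < 1})
  have hTO : ∀ n, Icc (v (2 * (2 * n + 1))) (v (2 * (2 * n + 2))) ⊆ O n := fun n y hy => by
    refine ⟨⟨(hsv (by omega)).trans_le hy.1, hy.2.trans_lt (hsv (by omega))⟩, ?_⟩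
    rcases hy.1.eq_or_lt with rfl | h₁
    · exact Or.inr (halt _).1
    rcases hy.2.eq_or_lt with rfl | h₂
    · exact Or.inr (halt _).1
    exact Or.inl ⟨h₁, h₂⟩
  choose φ hφO hφT hφ01 using fun n => exists_continuous_zero_one_of_isClosed
    (isOpen_Ioo.inter (isOpen_Ioo.union (isOpen_lt hd continuous_const))).isClosed_compl
    isClosed_Icc (disjoint_compl_left_iff_subset.2 (hTO n))
  have hpos : ∀ n y, 0 < φ n y → y ∈ O n := fun n y hy => by
    by_contra h
    exact hy.ne' (hφO n h)
  refine ⟨fun n => φ n, fun n => (φ n).continuous, hφ01, fun n => ?_, fun n => ?_,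
    fun n y h₀ h₁ => ?_, fun n n' y hnn' h₀ => ?_⟩
  · exact ⟨_, (halt (2 * n + 1)).2, hφT n ⟨(hsv (by omega)).le, (hsv (by omega)).le⟩⟩
  · exact ⟨_, (halt (2 * n + 1)).1, hφT n ⟨le_rfl, (hsv (by omega)).le⟩⟩
  · obtain ⟨-, hy | hy⟩ := hpos n y h₀
    · exact absurd (hφT n (Ioo_subset_Icc_self hy)) h₁.ne
    · exact hy
  · by_contra h
    have hy := (hpos n y h₀).1
    have hy' := (hpos n' y (lt_of_le_of_ne (hφ01 n' y).1 (Ne.symm h))).1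
    rcases hnn'.lt_or_gt with hlt | hlt
    · exact lt_irrefl y ((hy.2.trans_le
        (hsv.monotone (show 2 * (2 * n + 2) + 1 ≤ 2 * (2 * n') + 1 by omega))).trans hy'.1)
    · exact lt_irrefl y ((hy'.2.trans_le
        (hsv.monotone (show 2 * (2 * n' + 2) + 1 ≤ 2 * (2 * n) + 1 by omega))).trans hy.1)

theorem exists_isBumpFamily (hd : Continuous d) {u : ℕ → X} (hu : Monotone u ∨ Antitone u)
    (halt : ∀ᶠ n in atTop, d (u (2 * n)) < 1 ∧ 1 < d (u (2 * n + 1))) :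
    ∃ φ, IsBumpFamily d φ := by
  obtain ⟨N, hN⟩ := eventually_atTop.1 halt
  have hv : ∀ n, d (u (2 * N + 2 * n)) < 1 ∧ 1 < d (u (2 * N + (2 * n + 1))) := fun n => by
    simpa only [mul_add, add_assoc] using hN (N + n) (by omega)
  have hshift : Monotone (2 * N + ·) := fun a b h => Nat.add_le_add_left h _
  rcases hu with hu | hu
  · exact exists_isBumpFamily_of_monotone hd (hu.comp hshift) hv
  · obtain ⟨φ, hφ⟩ := exists_isBumpFamily_of_monotone (X := Xᵒᵈ) (d := d ∘ OrderDual.ofDual)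
      (hd.comp continuous_ofDual) (hu.comp_monotone hshift).dual_right hv
    exact ⟨_, hφ.comp continuous_toDual OrderDual.toDual.surjective⟩

end Bumps

theorem Int.fract_lt_fract_iff_of_mem {a b : ℝ} (ha : a ∈ Ico 0 1) (hb : b ∈ Ico (-1) 0) :
    (Int.fract a < Int.fract b ↔ a - b < 1) ∧ (Int.fract b < Int.fract a ↔ 1 < a - b) := by
  have hb' : Int.fract b = b + 1 := by
    rw [← Int.fract_add_one, Int.fract_eq_self.2 ⟨by linarith [hb.1], by linarith [hb.2]⟩]
  rw [Int.fract_eq_self.2 ha, hb']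
  constructor <;> constructor <;> intro h <;> linarith

theorem eventually_sub_lt_one_and_one_lt_sub {X : Type*} [TopologicalSpace X] {F G : X → ℝ}
    (hF : Continuous F) (hG : Continuous G) {x : X} (hFx : F x ∈ Ioo 0 1)
    (hGx : G x ∈ Ioo (-1) 0) {u : ℕ → X} (hu : Tendsto u atTop (𝓝 x))
    (hfr : ∀ n, Int.fract (F (u (2 * n))) < Int.fract (G (u (2 * n))) ∧
      Int.fract (G (u (2 * n + 1))) < Int.fract (F (u (2 * n + 1)))) :
    ∀ᶠ n in atTop, F (u (2 * n)) - G (u (2 * n)) < 1 ∧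
      1 < F (u (2 * n + 1)) - G (u (2 * n + 1)) := by
  have hnear : ∀ᶠ n in atTop, F (u n) ∈ Ico 0 1 ∧ G (u n) ∈ Ico (-1) 0 :=
    hu.eventually ((hF.continuousAt.eventually_mem (Ico_mem_nhds hFx.1 hFx.2)).and
      (hG.continuousAt.eventually_mem (Ico_mem_nhds hGx.1 hGx.2)))
  have h₀ : Tendsto (2 * ·) atTop atTop :=
    tendsto_atTop_mono (fun n => show n ≤ 2 * n by omega) tendsto_id
  have h₁ : Tendsto (2 * · + 1) atTop atTop :=
    tendsto_atTop_mono (fun n => show n ≤ 2 * n + 1 by omega) tendsto_id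
  filter_upwards [h₀.eventually hnear, h₁.eventually hnear] with n hn₀ hn₁
  exact ⟨(Int.fract_lt_fract_iff_of_mem hn₀.1 hn₀.2).1.1 (hfr n).1,
    (Int.fract_lt_fract_iff_of_mem hn₁.1 hn₁.2).2.1 (hfr n).2⟩

theorem DenseRange.exists_pair_sub_eq_one {f : ℕ → C(I, ℝ)} (hf : DenseRange f) :
    ∃ (i₀ j₀ : ℕ) (x : I), (x : ℝ) ∈ Ioo 0 1 ∧ f i₀ x - f j₀ x = 1 ∧ f i₀ x ∈ Ioo 0 1 ∧
      ∀ y, f i₀ y - f j₀ y ∈ Ioo (-1) 2 := by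
  obtain ⟨i₀, hi₀⟩ := hf.exists_forall_abs_sub_lt (.const I (1 / 2))
    (by norm_num : (0 : ℝ) < 1 / 8)
  obtain ⟨j₀, hj₀⟩ := hf.exists_forall_abs_sub_lt ⟨fun y => -(y : ℝ), by fun_prop⟩
    (by norm_num : (0 : ℝ) < 1 / 8)
  have hd : ∀ y : I, (y : ℝ) + 1 / 4 < f i₀ y - f j₀ y ∧ f i₀ y - f j₀ y < y + 3 / 4 :=
    fun y => by
      have h₁ := abs_lt.1 (hi₀ y)
      have h₂ := abs_lt.1 (hj₀ y)
      simp only [ContinuousMap.const_apply, ContinuousMap.coe_mk] at h₁ h₂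
      constructor <;> linarith [h₁.1, h₁.2, h₂.1, h₂.2]
  obtain ⟨x, hx⟩ := intermediate_value_univ 0 1
    (by fun_prop : Continuous fun y => f i₀ y - f j₀ y)
    (show (1 : ℝ) ∈ Icc _ _ from ⟨by linarith [hd 0, Set.Icc.coe_zero (R := ℝ)],
      by linarith [hd 1, Set.Icc.coe_one (R := ℝ)]⟩)
  have h₁ := abs_lt.1 (hi₀ x)
  simp only [ContinuousMap.const_apply] at h₁
  refine ⟨i₀, j₀, x, ⟨?_, ?_⟩, hx, ⟨?_, ?_⟩, fun y => ⟨?_, ?_⟩⟩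
  any_goals linarith [hd x]
  all_goals linarith [hd y, y.2.1, y.2.2]

section ProbeFamily

variable {α : Type*} [TopologicalSpace α] [CompactSpace α]

/-- `f (k n)` is a bump of height about `7/2` over `f j₀`; the bumps have disjoint supports, each
plateau contains points on both sides of the crossing level `f i₀ - f j₀ = 1`, and on the ramps
`f i₀ - f j₀ < 1`. -/
structure IsProbeFamily (f : ℕ → C(α, ℝ)) (i₀ j₀ : ℕ) (k : ℕ → ℕ) : Prop where
  norm_sub_lt : ∀ n ∈ insert i₀ (range k), ‖f n - f j₀‖ < 4
  exists_one_lt : ∀ n, ∃ x, 1 < f i₀ x - f j₀ x ∧ 2 < f (k n) x - f j₀ x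
  exists_lt_one : ∀ n, ∃ x, f i₀ x - f j₀ x < 1 ∧ 2 < f (k n) x - f i₀ x ∧
    2 < f (k n) x - f j₀ x
  neg_one_lt : ∀ x, -1 < f i₀ x - f j₀ x
  three_le : ∀ n x, 1 < f i₀ x - f j₀ x → 1 < f (k n) x - f j₀ x → 3 ≤ f (k n) x - f j₀ x
  neg_one_lt_probe : ∀ n x, -1 < f (k n) x - f j₀ x
  le_one : ∀ n n' x, n ≠ n' → 1 < f (k n) x - f j₀ x → f (k n') x - f j₀ x ≤ 1

theorem IsBumpFamily.exists_isProbeFamily {f : ℕ → C(α, ℝ)} {i₀ j₀ : ℕ} {φ : ℕ → α → ℝ}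
    (hφ : IsBumpFamily (fun y => f i₀ y - f j₀ y) φ) (hf : DenseRange f)
    (hd : ∀ y, f i₀ y - f j₀ y ∈ Ioo (-1) 2) : ∃ k, IsProbeFamily f i₀ j₀ k := by
  choose k hk using fun n => hf.exists_forall_abs_sub_lt
    (f j₀ + (7 / 2 : ℝ) • ⟨φ n, hφ.continuous n⟩) (by norm_num : (0 : ℝ) < 1 / 20)
  have he : ∀ n y, |f (k n) y - f j₀ y - 7 / 2 * φ n y| < 1 / 20 := fun n y => by
    simpa [sub_sub] using hk n y
  have hlo : ∀ n y, 7 / 2 * φ n y - 1 / 20 < f (k n) y - f j₀ y := fun n y =>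
    by linarith [(abs_lt.1 (he n y)).1]
  have hhi : ∀ n y, f (k n) y - f j₀ y < 7 / 2 * φ n y + 1 / 20 := fun n y =>
    by linarith [(abs_lt.1 (he n y)).2]
  refine ⟨k, ⟨?_, fun n => ?_, fun n => ?_, fun y => (hd y).1, fun n y h₁ h₂ => ?_,
    fun n y => ?_, fun n n' y hnn' h => ?_⟩⟩
  · rintro _ (rfl | ⟨n, rfl⟩) <;>
      refine (ContinuousMap.norm_lt_iff _ (by norm_num)).2 fun y => ?_ <;>
      simp only [ContinuousMap.sub_apply, Real.norm_eq_abs, abs_lt]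
    · constructor <;> linarith [(hd y).1, (hd y).2]
    · constructor <;> linarith [hlo n y, hhi n y, (hφ.mem_Icc n y).1, (hφ.mem_Icc n y).2]
  · obtain ⟨x, hx, hφx⟩ := hφ.exists_one_lt n
    exact ⟨x, hx, by linarith [hlo n x]⟩
  · obtain ⟨x, hx, hφx⟩ := hφ.exists_lt_one n
    exact ⟨x, hx, by linarith [hlo n x], by linarith [hlo n x]⟩
  · by_contra! h₃
    have := hφ.lt_one n y (by linarith [hhi n y]) (by linarith [hlo n y])
    linarith
  · linarith [hlo n y, (hφ.mem_Icc n y).1]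
  · have := hφ.eq_zero n n' y hnn' (by linarith [hhi n y])
    linarith [hhi n' y]

theorem ICDense.exists_isProbeFamily {f : ℕ → C(I, ℝ)} (hf : ICDense (range f)) :
    ∃ i₀ j₀ k, IsProbeFamily f i₀ j₀ k := by
  obtain ⟨-, hf_dense, -, -, hf_osc⟩ := hf
  obtain ⟨i₀, j₀, x, hx, hdx, hfx, hd⟩ := DenseRange.exists_pair_sub_eq_one hf_dense
  have hne : f i₀ ≠ f j₀ := fun h => by simp [h] at hdx
  obtain ⟨u, hu, hux, hfr⟩ := hf_osc _ _ (mem_range_self i₀) (mem_range_self j₀) hne x hx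
    (Int.fract_eq_fract.2 ⟨1, by simp [hdx]⟩)
  obtain ⟨φ, hφ⟩ := exists_isBumpFamily (d := fun y => f i₀ y - f j₀ y) (by fun_prop) hu
    (eventually_sub_lt_one_and_one_lt_sub (f i₀).continuous (f j₀).continuous hfx
      ⟨by linarith [hfx.1], by linarith [hfx.2]⟩ hux hfr)
  exact ⟨i₀, j₀, hφ.exists_isProbeFamily hf_dense hd⟩

namespace IsProbeFamily

variable {f G : ℕ → C(α, ℝ)} {i₀ j₀ : ℕ} {k : ℕ → ℕ}

theorem norm_sub_lt_eight (hP : IsProbeFamily f i₀ j₀ k) :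
    ∀ n ∈ insert j₀ (insert i₀ (range k)), ∀ n' ∈ insert j₀ (insert i₀ (range k)),
      ‖f n - f n'‖ < 8 := by
  have h : ∀ n ∈ insert j₀ (insert i₀ (range k)), ‖f n - f j₀‖ < 4 := by
    rintro n (rfl | hn)
    exacts [by simp, hP.norm_sub_lt n hn]
  intro n hn n' hn'
  linarith [norm_sub_le_norm_sub_add_norm_sub (f n) (f j₀) (f n'), norm_sub_rev (f j₀) (f n'),
    h n hn, h n' hn']

theorem norm_sub_lt_eight_of_floor_eq (hP : IsProbeFamily f i₀ j₀ k)
    (hfG : ∀ n n', ⌊‖f n - f n'‖⌋ = ⌊‖G n - G n'‖⌋) :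
    ∀ n ∈ insert j₀ (insert i₀ (range k)), ∀ n' ∈ insert j₀ (insert i₀ (range k)),
      ‖G n - G n'‖ < 8 := fun n hn n' hn' => by
  have := Int.floor_lt.2 (show ‖f n - f n'‖ < ((8 : ℤ) : ℝ) by
    exact_mod_cast hP.norm_sub_lt_eight n hn n' hn')
  rw [hfG] at this
  exact_mod_cast Int.floor_lt.1 this

theorem exists_one_lt_of_floor_eq (hP : IsProbeFamily f i₀ j₀ k) (hf : DenseRange f)
    (hfG : ∀ n n', ⌊‖f n - f n'‖⌋ = ⌊‖G n - G n'‖⌋) (n : ℕ) :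
    ∃ x, (1 < G i₀ x - G j₀ x ∧ 2 < G (k n) x - G j₀ x) ∨
      (G i₀ x - G j₀ x < -1 ∧ G (k n) x - G j₀ x < -2) := by
  obtain ⟨x, hd, he⟩ := hP.exists_one_lt n
  -- the radii make `m - a i - b j` the constants `1`, `2` of the two inequalities
  obtain ⟨y, hy | hy⟩ := exists_envelopeGap_of_mem (p := ![i₀, k n]) (a := ![5, 4])
    (q := ![j₀]) (b := ![4]) (m := 10) hf hfG hP.norm_sub_lt_eight
    (by simp [Fin.forall_fin_two]) (by simp) (by decide) (by decide) (x := x)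
    (fun i j => by fin_cases i <;> fin_cases j <;> norm_num <;> linarith)
  · have h₁ := hy 0 0; have h₂ := hy 1 0; norm_num at h₁ h₂
    exact ⟨y, Or.inl ⟨by linarith, by linarith⟩⟩
  · have h₁ := hy 0 0; have h₂ := hy 0 1; norm_num at h₁ h₂
    exact ⟨y, Or.inr ⟨by linarith, by linarith⟩⟩

theorem exists_lt_one_of_floor_eq (hP : IsProbeFamily f i₀ j₀ k) (hf : DenseRange f)
    (hfG : ∀ n n', ⌊‖f n - f n'‖⌋ = ⌊‖G n - G n'‖⌋) (n : ℕ) :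
    ∃ x, (G i₀ x - G j₀ x < 1 ∧ 2 < G (k n) x - G j₀ x) ∨
      (-1 < G i₀ x - G j₀ x ∧ G (k n) x - G j₀ x < -2) := by
  obtain ⟨x, hd, he, he'⟩ := hP.exists_lt_one n
  obtain ⟨y, hy | hy⟩ := exists_envelopeGap_of_mem (p := ![j₀, k n]) (a := ![7, 4])
    (q := ![i₀, j₀]) (b := ![4, 4]) (m := 10) hf hfG hP.norm_sub_lt_eight
    (by simp [Fin.forall_fin_two]) (by simp [Fin.forall_fin_two]) (by decide) (by decide)
    (x := x) (fun i j => by fin_cases i <;> fin_cases j <;> norm_num <;> linarith)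
  all_goals have h₁ := hy 0 0; have h₂ := hy 1 1; norm_num at h₁ h₂
  exacts [⟨y, Or.inl ⟨by linarith, by linarith⟩⟩, ⟨y, Or.inr ⟨by linarith, by linarith⟩⟩]

/-- On the `f` side the ramps of the probes lie in `{f i₀ - f j₀ < 1}`, so no point has
`1 < f i₀ - f j₀` and `1 < f (k n) - f j₀ < 3`; this is the absence of a gap, which transfers. -/
theorem ne_two_of_floor_eq (hP : IsProbeFamily f i₀ j₀ k) (hG : DenseRange G)
    (hfG : ∀ n n', ⌊‖f n - f n'‖⌋ = ⌊‖G n - G n'‖⌋) (n : ℕ) (y : α) :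
    (1 < G i₀ y - G j₀ y → G (k n) y - G j₀ y ≠ 2) ∧
      (G i₀ y - G j₀ y < -1 → G (k n) y - G j₀ y ≠ -2) := by
  have hf : ∀ z, ¬ EnvelopeGap (f ∘ ![i₀, k n, j₀]) ![4, 4, 6] (f ∘ ![j₀, k n]) ![4, 6] 9 z ∧
      ¬ EnvelopeGap (f ∘ ![j₀, k n]) ![4, 6] (f ∘ ![i₀, k n, j₀]) ![4, 4, 6] 9 z := by
    refine fun z => ⟨fun h => ?_, fun h => ?_⟩
    · have h₁ := h 0 0; have h₂ := h 1 0; have h₃ := h 2 1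
      norm_num [Matrix.cons_val_two] at h₁ h₂ h₃
      linarith [hP.three_le n z (by linarith) (by linarith)]
    · have h₁ := h 0 0; norm_num at h₁
      linarith [hP.neg_one_lt z]
  have hGf : ∀ n n', ⌊‖G n - G n'‖⌋ = ⌊‖f n - f n'‖⌋ := fun n n' => (hfG n n').symm
  have mem₃ : ∀ i, ![i₀, k n, j₀] i ∈ insert j₀ (insert i₀ (range k)) := by
    simp [Fin.forall_fin_succ]
  have mem₂ : ∀ i, ![j₀, k n] i ∈ insert j₀ (insert i₀ (range k)) := by
    simp [Fin.forall_fin_two]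
  have hS := hP.norm_sub_lt_eight_of_floor_eq hfG
  refine ⟨fun hD hE => not_envelopeGap_of_mem hG hGf hS mem₃ mem₂ (by decide) (by decide) hf y
    fun i j => ?_, fun hD hE => not_envelopeGap_of_mem hG hGf hS mem₂ mem₃ (by decide)
      (by decide) (fun z => (hf z).symm) y fun i j => ?_⟩
  all_goals fin_cases i <;> fin_cases j <;> norm_num <;> linarith

theorem le_one_of_floor_eq (hP : IsProbeFamily f i₀ j₀ k) (hG : DenseRange G)
    (hfG : ∀ n n', ⌊‖f n - f n'‖⌋ = ⌊‖G n - G n'‖⌋) {n n' : ℕ} (hnn' : n ≠ n') (y : α) :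
    (1 < G (k n) y - G j₀ y → G (k n') y - G j₀ y ≤ 1) ∧
      (G (k n) y - G j₀ y < -1 → -1 ≤ G (k n') y - G j₀ y) := by
  have hf : ∀ z, ¬ EnvelopeGap (f ∘ ![k n, k n']) ![4, 4] (f ∘ ![j₀]) ![4] 9 z ∧
      ¬ EnvelopeGap (f ∘ ![j₀]) ![4] (f ∘ ![k n, k n']) ![4, 4] 9 z := by
    refine fun z => ⟨fun h => ?_, fun h => ?_⟩
    · have h₁ := h 0 0; have h₂ := h 1 0; norm_num at h₁ h₂
      linarith [hP.le_one n n' z hnn' (by linarith)]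
    · have h₁ := h 0 0; norm_num at h₁
      linarith [hP.neg_one_lt_probe n z]
  have hGf : ∀ n n', ⌊‖G n - G n'‖⌋ = ⌊‖f n - f n'‖⌋ := fun n n' => (hfG n n').symm
  have mem₂ : ∀ i, ![k n, k n'] i ∈ insert j₀ (insert i₀ (range k)) := by
    simp [Fin.forall_fin_two]
  have mem₁ : ∀ i, ![j₀] i ∈ insert j₀ (insert i₀ (range k)) := by simp
  have hS := hP.norm_sub_lt_eight_of_floor_eq hfG
  constructor
  all_goals intro hE; by_contra! hE'
  · refine not_envelopeGap_of_mem hG hGf hS mem₂ mem₁ (by decide) (by decide) hf y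
      fun i j => ?_
    fin_cases i <;> fin_cases j <;> norm_num <;> linarith
  · refine not_envelopeGap_of_mem hG hGf hS mem₁ mem₂ (by decide) (by decide)
      (fun z => (hf z).symm) y fun i j => ?_
    fin_cases i
    fin_cases j <;> norm_num <;> linarith

theorem infinite_of_floor_eq (hP : IsProbeFamily f i₀ j₀ k) [PreconnectedSpace α]
    (hf : DenseRange f) (hG : DenseRange G) (hfG : ∀ n n', ⌊‖f n - f n'‖⌋ = ⌊‖G n - G n'‖⌋) :
    {y | |G i₀ y - G j₀ y| = 1}.Infinite :=
  infinite_setOf_abs_eq_one (E := fun n y => G (k n) y - G j₀ y) (by fun_prop)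
    (fun n => by fun_prop) (fun n y => (hP.ne_two_of_floor_eq hG hfG n y).1)
    (fun n y => (hP.ne_two_of_floor_eq hG hfG n y).2)
    (hP.exists_one_lt_of_floor_eq hf hfG) (hP.exists_lt_one_of_floor_eq hf hfG)
    (fun n n' y hnn' => (hP.le_one_of_floor_eq hG hfG hnn' y).1)
    (fun n n' y hnn' => (hP.le_one_of_floor_eq hG hfG hnn' y).2)

end IsProbeFamily

end ProbeFamily

theorem mem_cr_of_abs_sub_eq_one {f g : C(I, ℝ)} {x : I} (h : |f x - g x| = 1) :
    x ∈ cr f g := by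
  obtain h | h := (abs_eq zero_le_one).1 h
  exacts [Int.fract_eq_fract.2 ⟨1, by simpa using h⟩, Int.fract_eq_fract.2 ⟨-1, by simpa using h⟩]

theorem no_step_isometry_ICDense_smoothlyDense_poly_general
    (f g : ℕ → C(unitInterval, ℝ))
    (hf : ICDense (Set.range f)) (hg : SmoothlyDense (Set.range g)) :
    ¬ ∃ π : ℕ ≃ ℕ, ∀ i j : ℕ, ⌊‖f i - f j‖⌋ = ⌊‖g (π i) - g (π j)‖⌋ := by
  rintro ⟨π, hπ⟩
  obtain ⟨i₀, j₀, k, hk⟩ := hf.exists_isProbeFamily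
  obtain ⟨-, hg_dense, ⟨-, hg_cr⟩, -⟩ := hg
  have hG : DenseRange (g ∘ π) := by rwa [DenseRange, π.surjective.range_comp]
  have hcr := hk.infinite_of_floor_eq hf.2.1 hG hπ
  have hne : g (π i₀) ≠ g (π j₀) := fun h => by
    obtain ⟨y, hy⟩ := hcr.nonempty
    simp [h] at hy
  exact hcr ((hg_cr _ _ (mem_range_self _) (mem_range_self _) hne).1.subset
    fun _ => mem_cr_of_abs_sub_eq_one)

/-- There is no step-isometry between an IC-dense set and a smoothly dense set of
polynomial functions: the graphs `GR(ICD)` and `GR(SD)` are non-isomorphic. -/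
theorem no_step_isometry_ICDense_smoothlyDense_poly
    (f g : ℕ → C(unitInterval, ℝ))
    (hf_inj : Function.Injective f) (hg_inj : Function.Injective g)
    (hf : ICDense (Set.range f)) (hg : SmoothlyDense (Set.range g))
    (hpoly : ∀ n : ℕ, ∃ p : Polynomial ℝ, ∀ x : unitInterval, g n x = p.eval (x : ℝ)) :
    ¬ ∃ π : ℕ ≃ ℕ, ∀ i j : ℕ, ⌊‖f i - f j‖⌋ = ⌊‖g (π i) - g (π j)‖⌋ :=
  no_step_isometry_ICDense_smoothlyDense_poly_general f g hf hg
end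
end

section
/- Let F = {f_1,…,f_k} and G = {g_1,…,g_k} be finite transverse subsets of C[0,1] (with the f_i pairwise distinct and the g_i pairwise distinct), and let φ be the bijection φ(f_i) = g_i. Let X = (⋃_{i≠j} cr(f_i,f_j)) ∪ {0,1} and Y = (⋃_{i≠j} cr(g_i,g_j)) ∪ {0,1}, and suppose |X| = |Y| = n+1; write X = {x_0 < x_1 < … < x_n} and Y = {y_0 < y_1 < … < y_n} (so x_0 = y_0 = 0 and x_n = y_n = 1), and set I_m = (x_{m−1}, x_m) and J_m = (y_{m−1}, y_m) for 1 ≤ m ≤ n. Suppose that for every m with 1 ≤ m ≤ n, φ is order-preserving on (I_m, J_m), meaning: (a) for all i, all x ∈ I_m and all y ∈ J_m, ⌊f_i(x)⌋ = ⌊g_i(y)⌋; and (b) for all i ≠ j, either ⟨f_i(x)⟩ < ⟨f_j(x)⟩ for all x ∈ I_m and ⟨g_i(y)⟩ < ⟨g_j(y)⟩ for all y ∈ J_m, or ⟨f_i(x)⟩ > ⟨f_j(x)⟩ for all x ∈ I_m and ⟨g_i(y)⟩ > ⟨g_j(y)⟩ for all y ∈ J_m. Then ⌊‖f_i − f_j‖⌋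 = ⌊‖g_i − g_j‖⌋ for all i, j; that is, φ is a step-isometry. -/
/-!
For `i ≠ j` the norm of `f i - f j` is attained at some `c`. A crossing of `f i` and `f j` is never
a local extremum of `f i - f j`, so `(f i - f j) c` is not an integer and `⌊|f i - f j|⌋` is
constant near `c`; moreover `c` is adherent to some interval `I_m`. For `a ∈ I_m` and `b ∈ J_m`,
`f i a - f j a` and `g i b - g j b` lie in the same open interval between consecutive integers,
fixed by the integer parts of the values and the order of their fractional parts. Hence
`⌊‖f i - f j‖⌋ ≤ ⌊‖g i - g j‖⌋`, and the reverse inequality is the same argument with the roles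
of the two families exchanged.
-/

open Set unitInterval

noncomputable section

open Topology

section FloorAbs

variable {R : Type*} [CommRing R] [LinearOrder R] [IsStrictOrderedRing R] [FloorRing R]

theorem Int.floor_abs_of_mem_Ioo {M : ℤ} {r : R} (hr : r ∈ Ioo (M : R) (M + 1)) :
    ⌊|r|⌋ = if 0 ≤ M then M else -M - 1 := by
  obtain ⟨hlo, hhi⟩ := hr
  split_ifs with hM
  · have hr0 : (0 : R) < r := lt_of_le_of_lt (by exact_mod_cast hM) hlo
    rw [abs_of_pos hr0, Int.floor_eq_iff]
    exact ⟨hlo.le, hhi⟩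
  · have hM' : (M : R) + 1 ≤ 0 := by exact_mod_cast (by omega : M + 1 ≤ 0)
    rw [abs_of_neg (hhi.trans_le hM'), Int.floor_eq_iff]
    push_cast
    constructor <;> linarith

theorem sub_mem_Ioo_of_fract_lt {p q : R} (h : Int.fract p < Int.fract q) :
    p - q ∈ Ioo ((⌊p⌋ - ⌊q⌋ - 1 : ℤ) : R) ((⌊p⌋ - ⌊q⌋ - 1 : ℤ) + 1) := by
  have hp := Int.fract_nonneg p
  have hq := Int.fract_lt_one q
  simp only [Int.fract] at h hp hq
  push_cast
  constructor <;> linarith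

theorem floor_abs_sub_eq_of_fract_lt {p q p' q' : R} (hp : ⌊p⌋ = ⌊p'⌋) (hq : ⌊q⌋ = ⌊q'⌋)
    (h : Int.fract p < Int.fract q) (h' : Int.fract p' < Int.fract q') :
    ⌊|p - q|⌋ = ⌊|p' - q'|⌋ := by
  rw [Int.floor_abs_of_mem_Ioo (sub_mem_Ioo_of_fract_lt h),
    Int.floor_abs_of_mem_Ioo (sub_mem_Ioo_of_fract_lt h'), hp, hq]

end FloorAbs

theorem IsMaxOn.isExtrOn_of_abs {α β : Type*} [AddCommGroup β] [LinearOrder β]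
    [IsOrderedAddMonoid β] {h : α → β} {s : Set α} {c : α}
    (hc : IsMaxOn (fun t => |h t|) s c) : IsExtrOn h s c := by
  rcases le_or_gt 0 (h c) with hc0 | hc0
  · refine Or.inr fun t ht => ?_
    calc h t ≤ |h t| := le_abs_self _
      _ ≤ |h c| := hc ht
      _ = h c := abs_of_nonneg hc0
  · refine Or.inl fun t ht => ?_
    calc h c = -|h c| := by rw [abs_of_neg hc0, neg_neg]
      _ ≤ -|h t| := neg_le_neg (hc ht)
      _ ≤ h t := neg_abs_le _

theorem ContinuousMap.exists_norm_apply_eq_norm {X E : Type*} [TopologicalSpace X]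
    [CompactSpace X] [Nonempty X] [SeminormedAddCommGroup E] (h : C(X, E)) :
    ∃ c, ‖h c‖ = ‖h‖ := by
  obtain ⟨c, -, hc⟩ := isCompact_univ.exists_isMaxOn univ_nonempty h.continuous.norm.continuousOn
  exact ⟨c, le_antisymm (h.norm_coe_le_norm c)
    ((ContinuousMap.norm_le _ (norm_nonneg _)).2 fun t => hc (mem_univ t))⟩

theorem Fin.exists_mem_Icc_castSucc_succ {α : Type*} [LinearOrder α] {n : ℕ} (hn : n ≠ 0)
    {x : Fin (n + 1) → α} {c : α} (h0 : x 0 ≤ c) (h1 : c ≤ x (Fin.last n)) :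
    ∃ m : Fin n, c ∈ Icc (x m.castSucc) (x m.succ) := by
  simp only [mem_Icc]
  by_contra! H
  have hle : ∀ j, x j ≤ c := Fin.induction h0 fun m hm => (H m hm).le
  obtain ⟨n, rfl⟩ := Nat.exists_eq_succ_of_ne_zero hn
  exact (H (Fin.last n) (hle _)).not_ge (Fin.succ_last n ▸ h1)

theorem StrictMono.exists_mem_Ioo_castSucc_succ_of_mem_nhds {α : Type*} [LinearOrder α]
    [TopologicalSpace α] [OrderTopology α] [DenselyOrdered α] {n : ℕ} (hn : n ≠ 0)
    {x : Fin (n + 1) → α} (hx : StrictMono x) {c : α} (h0 : x 0 ≤ c) (h1 : c ≤ x (Fin.last n))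
    {s : Set α} (hs : s ∈ 𝓝 c) : ∃ m : Fin n, ∃ a ∈ Ioo (x m.castSucc) (x m.succ), a ∈ s := by
  obtain ⟨m, hm⟩ := Fin.exists_mem_Icc_castSucc_succ hn h0 h1
  rw [← closure_Ioo (hx (Fin.castSucc_lt_succ (i := m))).ne] at hm
  obtain ⟨a, has, ha⟩ := mem_closure_iff_nhds.1 hm s hs
  exact ⟨m, a, ha, has⟩

theorem mem_cr_iff {f g : C(I, ℝ)} {t : I} : t ∈ cr f g ↔ f t - g t ∈ range Int.cast := by
  simp [cr, Int.fract_eq_fract, eq_comm]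

theorem Transverse.apply_sub_notMem_range_intCast {V : Set C(I, ℝ)} (hV : Transverse V)
    {f g : C(I, ℝ)} (hf : f ∈ V) (hg : g ∈ V) (hfg : f ≠ g) {c : I}
    (hc : ‖(f - g) c‖ = ‖f - g‖) : (f - g) c ∉ range Int.cast := by
  intro hcr
  have hmax : IsMaxOn (fun t => |f t - g t|) univ c := fun t _ =>
    show |f t - g t| ≤ |f c - g c| by
      simpa only [← hc, ContinuousMap.sub_apply, Real.norm_eq_abs] using (f - g).norm_coe_le_norm t
  exact (hV.2 f g hf hg hfg).2.2.2 c (mem_cr_iff.2 hcr)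
    (hmax.isExtrOn_of_abs.isLocalExtr Filter.univ_mem)

/-- The two conditions (a) and (b) of order preservation on a pair of intervals `(A, B)`. -/
def OrderPreservingOn {ι : Type*} (f g : ι → C(I, ℝ)) (A B : Set I) : Prop :=
  (∀ i, ∀ a ∈ A, ∀ b ∈ B, ⌊f i a⌋ = ⌊g i b⌋) ∧
  ∀ i j, i ≠ j →
    ((∀ a ∈ A, Int.fract (f i a) < Int.fract (f j a)) ∧
      (∀ b ∈ B, Int.fract (g i b) < Int.fract (g j b))) ∨
    ((∀ a ∈ A, Int.fract (f j a) < Int.fract (f i a)) ∧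
      (∀ b ∈ B, Int.fract (g j b) < Int.fract (g i b)))

namespace OrderPreservingOn

variable {ι : Type*} {f g : ι → C(I, ℝ)} {A B : Set I}

theorem symm (h : OrderPreservingOn f g A B) : OrderPreservingOn g f B A :=
  ⟨fun i b hb a ha => (h.1 i a ha b hb).symm, fun i j hij => (h.2 i j hij).imp
    (fun hlt => ⟨hlt.2, hlt.1⟩) fun hgt => ⟨hgt.2, hgt.1⟩⟩

theorem floor_abs_sub_eq (h : OrderPreservingOn f g A B) (i j : ι) {a b : I} (ha : a ∈ A)
    (hb : b ∈ B) : ⌊|f i a - f j a|⌋ = ⌊|g i b - g j b|⌋ := by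
  by_cases hij : i = j
  · simp [hij]
  rcases h.2 i j hij with ⟨hf, hg⟩ | ⟨hf, hg⟩
  · exact floor_abs_sub_eq_of_fract_lt (h.1 i a ha b hb) (h.1 j a ha b hb) (hf a ha) (hg b hb)
  · rw [abs_sub_comm, abs_sub_comm (g i b)]
    exact floor_abs_sub_eq_of_fract_lt (h.1 j a ha b hb) (h.1 i a ha b hb) (hf a ha) (hg b hb)

end OrderPreservingOn

theorem floor_norm_sub_le_of_orderPreservingOn {ι : Type*} {n : ℕ} {f g : ι → C(I, ℝ)}
    (hf_inj : Function.Injective f) (hF : Transverse (range f)) {x y : Fin (n + 1) → I}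
    (hx_mono : StrictMono x) (hy_mono : StrictMono y) (hx01 : {0, 1} ⊆ range x)
    (horder : ∀ m : Fin n, OrderPreservingOn f g (Ioo (x m.castSucc) (x m.succ))
      (Ioo (y m.castSucc) (y m.succ)))
    (i j : ι) : ⌊‖f i - f j‖⌋ ≤ ⌊‖g i - g j‖⌋ := by
  by_cases hij : i = j
  · simp [hij]
  obtain ⟨m₀, hm₀⟩ := hx01 (mem_insert 0 _)
  obtain ⟨m₁, hm₁⟩ := hx01 (mem_insert_of_mem 0 rfl)
  have h0 : ∀ c, x 0 ≤ c := fun c => (hm₀ ▸ hx_mono.monotone (Fin.zero_le m₀)).trans nonneg'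
  have h1 : ∀ c, c ≤ x (Fin.last n) := fun c =>
    (le_one' (t := c)).trans (hm₁ ▸ hx_mono.monotone m₁.le_last)
  have hn : n ≠ 0 := by
    rintro rfl
    exact absurd ((h1 1).trans (h0 0)) (by simp)
  set F := f i - f j
  obtain ⟨c, hc⟩ := F.exists_norm_apply_eq_norm
  have hFc := Int.floor_lt_self_iff.2
    (hF.apply_sub_notMem_range_intCast ⟨i, rfl⟩ ⟨j, rfl⟩ (hf_inj.ne hij) hc)
  have hnear : ∀ᶠ t in 𝓝 c, F t ∈ Ioo (⌊F c⌋ : ℝ) (⌊F c⌋ + 1) :=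
    F.continuous.continuousAt.eventually (Ioo_mem_nhds hFc (Int.lt_floor_add_one _))
  obtain ⟨m, a, ha, hFa⟩ :=
    hx_mono.exists_mem_Ioo_castSucc_succ_of_mem_nhds hn (h0 c) (h1 c) hnear
  obtain ⟨b, hb⟩ := exists_between (hy_mono (Fin.castSucc_lt_succ (i := m)))
  calc ⌊‖F‖⌋ = ⌊|F c|⌋ := by rw [← hc, Real.norm_eq_abs]
    _ = ⌊|F a|⌋ := by
      rw [Int.floor_abs_of_mem_Ioo ⟨hFc, Int.lt_floor_add_one _⟩, Int.floor_abs_of_mem_Ioo hFa]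
    _ = ⌊|(g i - g j) b|⌋ := (horder m).floor_abs_sub_eq i j ha hb
    _ ≤ ⌊‖g i - g j‖⌋ := Int.floor_le_floor ((g i - g j).norm_coe_le_norm b)

/-- Lemma 2.3 of the paper: if a bijection between finite transverse families is
order-preserving on all corresponding intervals of the crossing decompositions,
then it is a step-isometry. -/
theorem order_preserving_is_step_isometry
    (k n : ℕ) (f g : Fin k → C(unitInterval, ℝ))
    (hf_inj : Function.Injective f) (hg_inj : Function.Injective g)
    (hF : Transverse (Set.range f)) (hG : Transverse (Set.range g))
    (x y : Fin (n + 1) → unitInterval)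
    (hx_mono : StrictMono x) (hy_mono : StrictMono y)
    (hx_range : Set.range x =
      (⋃ (i : Fin k) (j : Fin k) (_ : i ≠ j), cr (f i) (f j)) ∪ ({0, 1} : Set unitInterval))
    (hy_range : Set.range y =
      (⋃ (i : Fin k) (j : Fin k) (_ : i ≠ j), cr (g i) (g j)) ∪ ({0, 1} : Set unitInterval))
    (horder : ∀ m : Fin n,
      (∀ i : Fin k, ∀ a ∈ Set.Ioo (x m.castSucc) (x m.succ),
        ∀ b ∈ Set.Ioo (y m.castSucc) (y m.succ), ⌊f i a⌋ = ⌊g i b⌋) ∧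
      (∀ i j : Fin k, i ≠ j →
        ((∀ a ∈ Set.Ioo (x m.castSucc) (x m.succ), Int.fract (f i a) < Int.fract (f j a)) ∧
          (∀ b ∈ Set.Ioo (y m.castSucc) (y m.succ), Int.fract (g i b) < Int.fract (g j b))) ∨
        ((∀ a ∈ Set.Ioo (x m.castSucc) (x m.succ), Int.fract (f j a) < Int.fract (f i a)) ∧
          (∀ b ∈ Set.Ioo (y m.castSucc) (y m.succ), Int.fract (g j b) < Int.fract (g i b))))) :
    ∀ i j : Fin k, ⌊‖f i - f j‖⌋ = ⌊‖g i - g j‖⌋ := fun i j =>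
  le_antisymm
    (floor_norm_sub_le_of_orderPreservingOn hf_inj hF hx_mono hy_mono
      (hx_range ▸ subset_union_right) horder i j)
    (floor_norm_sub_le_of_orderPreservingOn hg_inj hG hy_mono hx_mono
      (hy_range ▸ subset_union_right) (fun m => OrderPreservingOn.symm (horder m)) i j)
end
end

section
/- Let F be a finite set of continuous real-valued functions on [0,1] such that the sets cr(f,g) are pairwise disjoint for distinct unordered pairs {f,g} of elements of F. Then there is no strictly increasing sequence (a_n)_{n≥1} in [0,1] together with unordered pairs {g_n, h_n} of distinct elements of F satisfying {g_n, h_n} ≠ {g_{n+1}, h_{n+1}} and a_n ∈ cr(g_n, h_n) for every n. (Equivalently, the procedure generating the crossing partition of F terminates in finitely many steps.) -/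
open Set unitInterval

noncomputable section

lemma cr_comm (f g : C(unitInterval, ℝ)) : cr f g = cr g f := by
  ext x; simp [cr, eq_comm]

lemma isClosed_cr (f g : C(unitInterval, ℝ)) : IsClosed (cr f g) := by
  have : cr f g = (fun x => f x - g x) ⁻¹' (Set.range ((↑) : ℤ → ℝ)) := by
    ext x
    simp only [cr, mem_setOf_eq, mem_preimage, Set.mem_range, Int.fract_eq_fract]
    exact ⟨fun ⟨z, hz⟩ => ⟨z, hz.symm⟩, fun ⟨z, hz⟩ => ⟨z, hz.symm⟩⟩
  rw [this]
  exact (Int.isClosedEmbedding_coe_real.isClosed_range).preimage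
    ((f.continuous).sub g.continuous)

lemma cr_eq_of_pair_eq {f g f' g' : C(unitInterval, ℝ)}
    (h : ({f, g} : Set C(unitInterval, ℝ)) = {f', g'}) : cr f g = cr f' g' := by
  rcases Set.pair_eq_pair_iff.mp h with ⟨h1, h2⟩ | ⟨h1, h2⟩
  · rw [h1, h2]
  · rw [h1, h2, cr_comm]

lemma infinite_fiber {β : Type*} (A : Set ℕ) (hA : A.Infinite) (q : ℕ → β)
    (hfin : (Set.range q).Finite) : ∃ b, (A ∩ q ⁻¹' {b}).Infinite := by
  by_contra h
  push_neg at h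
  have hsub : A ⊆ ⋃ b ∈ Set.range q, A ∩ q ⁻¹' {b} := by
    intro n hn
    exact Set.mem_biUnion (Set.mem_range_self n) ⟨hn, rfl⟩
  exact hA ((hfin.biUnion fun b _ => h b).subset hsub)

/-- The procedure generating the crossing partition terminates: in a finite family
with pairwise disjoint crossing sets, there is no strictly increasing sequence of
crossing points belonging to unordered pairs that change at every step. -/
theorem crossing_partition_terminates
    (F : Set C(unitInterval, ℝ)) (hFfin : F.Finite)
    (hdisj : ∀ f g f' g' : C(unitInterval, ℝ), f ∈ F → g ∈ F → f' ∈ F → g' ∈ F →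
      f ≠ g → f' ≠ g' → ({f, g} : Set C(unitInterval, ℝ)) ≠ {f', g'} →
      Disjoint (cr f g) (cr f' g')) :
    ¬ ∃ (a : ℕ → unitInterval) (gs hs : ℕ → C(unitInterval, ℝ)),
        StrictMono a ∧
        ∀ n : ℕ, gs n ∈ F ∧ hs n ∈ F ∧ gs n ≠ hs n ∧ a n ∈ cr (gs n) (hs n) ∧
          ({gs n, hs n} : Set C(unitInterval, ℝ)) ≠ {gs (n + 1), hs (n + 1)} := by
  rintro ⟨a, gs, hs, hmono, hstep⟩
  set q : ℕ → Set C(unitInterval, ℝ) := fun n => {gs n, hs n} with hq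
  -- the range of q is finite
  have hqfin : (Set.range q).Finite := by
    apply hFfin.finite_subsets.subset
    rintro S ⟨n, rfl⟩
    intro f hf
    rcases hf with rfl | rfl
    · exact (hstep n).1
    · exact (hstep n).2.1
  -- the limit of a
  have hbdd : BddAbove (Set.range fun n => (a n : ℝ)) := by
    refine ⟨1, ?_⟩
    rintro x ⟨n, rfl⟩
    exact (a n).2.2
  have hmono' : Monotone fun n => (a n : ℝ) := fun m n hmn => hmono.monotone hmn
  set Lr : ℝ := ⨆ n, (a n : ℝ) with hLr
  have htendr : Filter.Tendsto (fun n => (a n : ℝ)) Filter.atTop (nhds Lr) :=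
    tendsto_atTop_ciSup hmono' hbdd
  have hLmem : Lr ∈ unitInterval := by
    constructor
    · exact le_trans (a 0).2.1 (le_ciSup hbdd 0)
    · exact ciSup_le fun n => (a n).2.2
  set L : unitInterval := ⟨Lr, hLmem⟩ with hL
  have htend : Filter.Tendsto a Filter.atTop (nhds L) :=
    tendsto_subtype_rng.mpr htendr
  -- key: if the fiber of q over S is infinite and n₀ is in it, then L ∈ cr (gs n₀) (hs n₀)
  have key : ∀ (A : Set ℕ), A.Infinite → ∀ n₀ ∈ A, (∀ n ∈ A, q n = q n₀) →
      L ∈ cr (gs n₀) (hs n₀) := by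
    intro A hA n₀ hn₀ hAq
    have hfreq : ∃ᶠ n in Filter.atTop, n ∈ A := by
      rw [Nat.frequently_atTop_iff_infinite]
      exact hA
    have hneBot : Filter.NeBot (Filter.atTop ⊓ Filter.principal A) :=
      Filter.frequently_mem_iff_neBot.mp hfreq
    have htend' : Filter.Tendsto a (Filter.atTop ⊓ Filter.principal A) (nhds L) :=
      htend.mono_left inf_le_left
    refine (isClosed_cr (gs n₀) (hs n₀)).mem_of_tendsto htend' ?_
    rw [Filter.eventually_inf_principal]
    filter_upwards with n hn
    have : cr (gs n) (hs n) = cr (gs n₀) (hs n₀) := cr_eq_of_pair_eq (hAq n hn)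
    rw [← this]
    exact (hstep n).2.2.2.1
  -- first pigeonhole
  obtain ⟨S, hS⟩ := infinite_fiber Set.univ Set.infinite_univ q hqfin
  set A₁ : Set ℕ := Set.univ ∩ q ⁻¹' {S} with hA₁
  have hA₁q : ∀ n ∈ A₁, q n = S := fun n hn => hn.2
  -- second pigeonhole on the shifted sequence
  obtain ⟨S', hS'⟩ := infinite_fiber A₁ hS (fun n => q (n + 1))
    (hqfin.subset (by rintro _ ⟨n, rfl⟩; exact ⟨n + 1, rfl⟩))
  obtain ⟨m, hm⟩ := hS'.nonempty
  have hSne : S' ≠ S := by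
    have hne := (hstep m).2.2.2.2
    intro h
    apply hne
    show q m = q (m + 1)
    rw [hA₁q m hm.1]
    exact ((Set.mem_singleton_iff.mp hm.2).trans h).symm
  set A₂ : Set ℕ := {n | q n = S'} with hA₂
  have hA₂inf : A₂.Infinite := by
    have himg : (fun n => n + 1) '' (A₁ ∩ (fun n => q (n + 1)) ⁻¹' {S'}) ⊆ A₂ := by
      rintro k ⟨n, hn, rfl⟩
      exact hn.2
    exact ((hS'.image (fun x hx y hy h => by omega)).mono himg)
  -- extract representatives
  obtain ⟨n₀, hn₀⟩ := hS.nonempty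
  obtain ⟨n₁, hn₁⟩ := hA₂inf.nonempty
  have hL₀ : L ∈ cr (gs n₀) (hs n₀) :=
    key A₁ hS n₀ hn₀ (fun n hn => by rw [hA₁q n hn, hA₁q n₀ hn₀])
  have hL₁ : L ∈ cr (gs n₁) (hs n₁) :=
    key A₂ hA₂inf n₁ hn₁ (fun n hn => by rw [Set.mem_setOf_eq.mp hn, Set.mem_setOf_eq.mp hn₁])
  have hdis := hdisj (gs n₀) (hs n₀) (gs n₁) (hs n₁) (hstep n₀).1 (hstep n₀).2.1
    (hstep n₁).1 (hstep n₁).2.1 (hstep n₀).2.2.1 (hstep n₁).2.2.1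
    (by
      intro h
      apply hSne
      rw [← hn₁, ← hA₁q n₀ hn₀]
      exact h.symm)
  exact Set.disjoint_left.mp hdis hL₀ hL₁
end
end

section
/- Let f, g ∈ C[0,1] and suppose that cr(f,g) contains neither 0 nor 1 and that no point of cr(f,g) is a local extremum of f − g (with respect to the subspace topology of [0,1]). Then ‖f − g‖ is not an integer. (In particular, no two distinct elements of a transverse set are at integer distance from each other.) -/
open Set unitInterval

noncomputable section

/-- If `cr(f,g)` contains neither `0` nor `1` and no point of `cr(f,g)` is a local
extremum of `f - g`, then `‖f - g‖` is not an integer. -/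
theorem norm_sub_not_integer
    (f g : C(unitInterval, ℝ))
    (h0 : (0 : unitInterval) ∉ cr f g) (h1 : (1 : unitInterval) ∉ cr f g)
    (hext : ∀ x ∈ cr f g, ¬ IsLocalExtr (fun t : unitInterval => f t - g t) x) :
    ∀ m : ℤ, ‖f - g‖ ≠ (m : ℝ) := by
  intro m hm
  set h : C(unitInterval, ℝ) := f - g with hh
  -- find a point where |h| attains its maximum
  obtain ⟨x₀, -, hmax⟩ :=
    isCompact_univ.exists_isMaxOn Set.univ_nonempty
      (Continuous.continuousOn (by continuity : Continuous fun x : unitInterval => |h x|))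
  have hx₀ : ∀ x : unitInterval, |h x| ≤ |h x₀| := fun x => hmax (mem_univ x)
  have hnorm : ‖h‖ = |h x₀| := by
    apply le_antisymm
    · apply (ContinuousMap.norm_le_of_nonempty h).2
      intro x
      simpa [Real.norm_eq_abs] using hx₀ x
    · simpa [Real.norm_eq_abs] using h.norm_coe_le_norm x₀
  by_cases hm0 : (m : ℝ) = 0
  · -- then f = g, contradicting h0
    have : h = 0 := norm_eq_zero.1 (by rw [hm, hm0])
    apply h0
    have : f 0 = g 0 := by
      have := congrArg (fun k : C(unitInterval, ℝ) => k 0) this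
      simpa [hh, sub_eq_zero] using this
    simp [cr, this]
  · have habs : |h x₀| = (m : ℝ) := by rw [← hnorm, ← hm, hh]
    have hcr : x₀ ∈ cr f g := by
      rcases abs_cases (h x₀) with ⟨he, -⟩ | ⟨he, -⟩
      · refine (Int.fract_eq_fract).2 ⟨m, ?_⟩
        have : h x₀ = (m : ℝ) := by rw [← habs, he]
        simpa [hh] using this
      · refine (Int.fract_eq_fract).2 ⟨-m, ?_⟩
        have : h x₀ = -(m : ℝ) := by rw [← habs, he, neg_neg]
        simpa [hh] using this
    apply hext x₀ hcr
    rcases le_or_gt (h x₀) 0 with hle | hlt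
    · -- global min
      left
      refine Filter.Eventually.of_forall fun x => ?_
      have h1 : -h x ≤ |h x| := neg_le_of_neg_le (neg_abs_le _)
      have h2 : |h x| ≤ |h x₀| := hx₀ x
      have h3 : |h x₀| = -h x₀ := abs_of_nonpos hle
      simp only [hh, ContinuousMap.sub_apply] at *
      linarith
    · -- global max
      right
      refine Filter.Eventually.of_forall fun x => ?_
      have h1 : h x ≤ |h x| := le_abs_self _
      have h2 : |h x| ≤ |h x₀| := hx₀ x
      have h3 : |h x₀| = h x₀ := abs_of_pos hlt
      simp only [hh, ContinuousMap.sub_apply] at *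
      linarith
end
end

section
/- Let x_1,…,x_k and y_1,…,y_k be real numbers such that ⌊x_i⌋ = ⌊y_i⌋ for every i, and such that for all i, j one has ⟨x_i⟩ < ⟨x_j⟩ if and only if ⟨y_i⟩ < ⟨y_j⟩. Then ⌊|x_i − x_j|⌋ = ⌊|y_i − y_j|⌋ for all i, j; that is, the map x_i ↦ y_i is a step-isometry of finite subsets of ℝ. -/
/-- Floor of a difference in terms of floors and fractional-part comparison. -/
lemma floor_sub_eq (a b : ℝ) :
    ⌊a - b⌋ = ⌊a⌋ - ⌊b⌋ + (if Int.fract a < Int.fract b then -1 else 0) := by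
  have ha := Int.fract_nonneg a
  have hb := Int.fract_nonneg b
  have ha1 := Int.fract_lt_one a
  have hb1 := Int.fract_lt_one b
  have h : a - b = ((⌊a⌋ - ⌊b⌋ : ℤ) : ℝ) + (Int.fract a - Int.fract b) := by
    simp only [Int.fract, Int.cast_sub]; ring
  rw [h, Int.floor_intCast_add]
  congr 1
  by_cases hlt : Int.fract a < Int.fract b
  · rw [if_pos hlt, Int.floor_eq_iff]
    constructor <;> push_cast <;> linarith
  · rw [if_neg hlt]
    push_neg at hlt
    rw [Int.floor_eq_iff]
    constructor <;> push_cast <;> linarith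

/-- fract of a difference is zero iff fracts are equal. -/
lemma fract_sub_zero_iff (a b : ℝ) :
    Int.fract (a - b) = 0 ↔ Int.fract a = Int.fract b := by
  have ha := Int.fract_nonneg a
  have hb := Int.fract_nonneg b
  have ha1 := Int.fract_lt_one a
  have hb1 := Int.fract_lt_one b
  have h : Int.fract (a - b) = a - b - ⌊a - b⌋ := rfl
  rw [h, floor_sub_eq]
  by_cases hlt : Int.fract a < Int.fract b
  · rw [if_pos hlt]
    constructor
    · intro he
      exfalso
      have : a - ⌊a⌋ - (b - ⌊b⌋) + 1 = 0 := by push_cast at he ⊢; linarith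
      simp only [Int.fract] at hlt ha hb ha1 hb1
      linarith
    · intro he; simp only [Int.fract] at hlt he; push_cast; linarith
  · rw [if_neg hlt]
    push_neg at hlt
    constructor <;> intro he <;> simp only [Int.fract] at * <;> push_cast at he ⊢ <;> linarith

/-- Floor of negation. -/
lemma floor_neg_eq (a : ℝ) :
    ⌊-a⌋ = -⌊a⌋ - (if Int.fract a = 0 then 0 else 1) := by
  by_cases h : Int.fract a = 0
  · rw [if_pos h]
    have : a = (⌊a⌋ : ℝ) := by
      have := Int.fract_add_floor a
      simp [h] at this; linarith [Int.fract_add_floor a]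
    conv_lhs => rw [this, ← Int.cast_neg, Int.floor_intCast]
    conv_rhs => rw [this, Int.floor_intCast]
    ring
  · rw [if_neg h]
    have h0 : 0 < Int.fract a := lt_of_le_of_ne (Int.fract_nonneg a) (Ne.symm h)
    have h1 := Int.fract_lt_one a
    have ha : a = ⌊a⌋ + Int.fract a := by rw [Int.fract]; ring
    rw [Int.floor_eq_iff] <;> push_cast <;> constructor <;> linarith

/-- Finite families of reals with equal floors and identically ordered fractional
parts are step-isometric: floors of all pairwise distances agree. -/
theorem step_isometry_of_floor_and_fract_order
    (k : ℕ) (x y : Fin k → ℝ)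
    (hfloor : ∀ i, ⌊x i⌋ = ⌊y i⌋)
    (hord : ∀ i j, Int.fract (x i) < Int.fract (x j) ↔ Int.fract (y i) < Int.fract (y j)) :
    ∀ i j, ⌊|x i - x j|⌋ = ⌊|y i - y j|⌋ := by
  intro i j
  have hF : ⌊x i - x j⌋ = ⌊y i - y j⌋ := by
    rw [floor_sub_eq, floor_sub_eq, hfloor i, hfloor j]
    congr 1
    by_cases h : Int.fract (x i) < Int.fract (x j)
    · rw [if_pos h, if_pos ((hord i j).mp h)]
    · rw [if_neg h, if_neg (fun h' => h ((hord i j).mpr h'))]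
  have heq : Int.fract (x i) = Int.fract (x j) ↔ Int.fract (y i) = Int.fract (y j) := by
    constructor <;> intro h
    · have h1 := (hord i j).not
      have h2 := (hord j i).not
      cases lt_trichotomy (Int.fract (y i)) (Int.fract (y j)) with
      | inl hl => exact absurd hl (h1.mp (by simp [h]))
      | inr hr => cases hr with
        | inl he => exact he
        | inr hr => exact absurd hr (h2.mp (by simp [h]))
    · have h1 := (hord i j).not
      have h2 := (hord j i).not
      cases lt_trichotomy (Int.fract (x i)) (Int.fract (x j)) with
      | inl hl => exact absurd hl (h1.mpr (by simp [h]))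
      | inr hr => cases hr with
        | inl he => exact he
        | inr hr => exact absurd hr (h2.mpr (by simp [h]))
  have hZ : (Int.fract (x i - x j) = 0) ↔ (Int.fract (y i - y j) = 0) := by
    rw [fract_sub_zero_iff, fract_sub_zero_iff]; exact heq
  by_cases hpos : 0 ≤ x i - x j
  · have hbpos : 0 ≤ y i - y j := by
      have : (0 : ℤ) ≤ ⌊y i - y j⌋ := hF ▸ Int.le_floor.mpr (by exact_mod_cast hpos)
      by_contra hb
      push_neg at hb
      have : ⌊y i - y j⌋ ≤ ⌊(0:ℝ)⌋ := Int.floor_le_floor hb.le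
      simp at this
      have hlt : y i - y j < ⌊y i - y j⌋ → False := fun h' => absurd (Int.floor_le (y i - y j)) (not_le.mpr h')
      have : ⌊y i - y j⌋ = 0 := le_antisymm this ‹(0:ℤ) ≤ _›
      have hfr : Int.fract (y i - y j) = y i - y j := by rw [Int.fract, this]; push_cast; ring
      have := Int.fract_nonneg (y i - y j)
      linarith [hfr ▸ this]
    rw [abs_of_nonneg hpos, abs_of_nonneg hbpos, hF]
  · push_neg at hpos
    have hbneg : y i - y j < 0 := by
      by_contra hb
      push_neg at hb
      have h1 : (0 : ℤ) ≤ ⌊y i - y j⌋ := Int.le_floor.mpr (by exact_mod_cast hb)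
      rw [← hF] at h1
      have : (0:ℝ) ≤ x i - x j := le_trans (by exact_mod_cast h1) (Int.floor_le _)
      linarith
    rw [abs_of_neg hpos, abs_of_neg hbneg, floor_neg_eq, floor_neg_eq, hF]
    congr 1
    simp only [hZ]
end

section
/- Let f, g : [0,1] → ℝ be continuous, and suppose there are sequences (y_m)_{m∈ℕ} and (z_m)_{m∈ℕ} in [0,1] with y_1 < z_1 < y_2 < z_2 < y_3 < … such that f(y_m) > g(y_m) and f(z_m) < g(z_m) for every m. Let p and q be real polynomials with p ≠ q, and let ψ : [0,1] → [0,1] be a homeomorphism such that for all t ∈ [0,1]: if f(t) > g(t) then p(ψ(t)) ≥ q(ψ(t)), and if f(t) < g(t) then p(ψ(t)) ≤ q(ψ(t)). Then a contradiction follows (i.e., no such configuration exists). (By the intermediate value theorem, p and q must agree at infinitely many points, forcing p = q.) -/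
open Set unitInterval Polynomial

noncomputable section

/-- If `f` and `g` cross infinitely often (alternating strict inequalities along an
interleaved pair of sequences) and a self-homeomorphism `ψ` of `[0,1]` carries the
order of `f, g` to that of two distinct polynomials `p, q`, then we reach a
contradiction: by the intermediate value theorem `p` and `q` would agree at
infinitely many points, forcing `p = q`. -/
theorem no_order_preserving_homeo_to_polynomials
    (f g : C(unitInterval, ℝ))
    (y z : ℕ → unitInterval)
    (hinter : ∀ m : ℕ, y m < z m ∧ z m < y (m + 1))
    (hy : ∀ m : ℕ, f (y m) > g (y m))
    (hz : ∀ m : ℕ, f (z m) < g (z m))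
    (p q : Polynomial ℝ) (hpq : p ≠ q)
    (ψ : unitInterval ≃ₜ unitInterval)
    (h1 : ∀ t : unitInterval, f t > g t → p.eval ((ψ t : unitInterval) : ℝ) ≥ q.eval ((ψ t : unitInterval) : ℝ))
    (h2 : ∀ t : unitInterval, f t < g t → p.eval ((ψ t : unitInterval) : ℝ) ≤ q.eval ((ψ t : unitInterval) : ℝ)) :
    False := by
  set r : Polynomial ℝ := p - q with hr
  have hr0 : r ≠ 0 := sub_ne_zero.mpr hpq
  -- the continuous function t ↦ r(ψ t)
  set F : unitInterval → ℝ := fun t => r.eval ((ψ t : unitInterval) : ℝ) with hF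
  have hFcont : Continuous F := by
    exact (r.continuous_aeval).comp (continuous_subtype_val.comp ψ.continuous)
  -- for each m, find a root of F in [y m, z m]
  have key : ∀ m : ℕ, ∃ c ∈ Icc (y m) (z m), F c = 0 := by
    intro m
    have h1' : F (y m) ≥ 0 := by
      have := h1 (y m) (hy m)
      simpa [hF, hr, Polynomial.eval_sub, sub_nonneg] using this
    have h2' : F (z m) ≤ 0 := by
      have := h2 (z m) (hz m)
      simpa [hF, hr, Polynomial.eval_sub, sub_nonpos] using this
    haveI : Fact ((0:ℝ) ≤ 1) := ⟨zero_le_one⟩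
    have hle : y m ≤ z m := (hinter m).1.le
    have := intermediate_value_Icc' hle hFcont.continuousOn
    have h0 : (0 : ℝ) ∈ Icc (F (z m)) (F (y m)) := ⟨h2', h1'⟩
    obtain ⟨c, hc, hc0⟩ := this h0
    exact ⟨c, hc, hc0⟩
  choose c hc hc0 using key
  -- z m < y n for m < n
  have hzy : ∀ m n : ℕ, m < n → z m < y n := by
    intro m n hmn
    induction n with
    | zero => omega
    | succ n ih =>
      rcases Nat.lt_succ_iff_lt_or_eq.mp hmn with h | h
      · exact (ih h).trans ((hinter n).1.trans (hinter n).2)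
      · subst h; exact (hinter m).2
  -- c is strictly monotone, hence injective
  have hcmono : StrictMono c := by
    intro m n hmn
    exact lt_of_le_of_lt (hc m).2 (lt_of_lt_of_le (hzy m n hmn) (hc n).1)
  -- infinitely many roots of r
  have hinj : Function.Injective (fun m => ((ψ (c m) : unitInterval) : ℝ)) := by
    intro m n h
    exact hcmono.injective (ψ.injective (Subtype.ext h))
  have hroots : {x : ℝ | r.IsRoot x}.Infinite := by
    apply Set.infinite_of_injective_forall_mem hinj
    intro m
    exact hc0 m
  exact hroots (Polynomial.finite_setOf_isRoot hr0)
end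
end
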